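/- arXiv:2104.06027 — 9 statements merged into one kernel-verified Lean document; each statement's English description precedes it below -/
import Mathlib

section
/- Let ℓ : [0,∞) → (0,∞) be a continuous slowly varying function. Then ℓ(x)·∫₁ˣ dv/(v·ℓ(v)) → ∞ as x → ∞. -/
open Filter MeasureTheory Set intervalIntegral

/-- A function `l : [0,∞) → (0,∞)` is slowly varying if `l(λx)/l(x) → 1` as `x → ∞`
for every `λ > 0`. -/
def SlowlyVarying (l : ℝ → ℝ) : Prop :=
  ∀ lam : ℝ, 0 < lam → Tendsto (fun x => l (lam * x) / l x) atTop (nhds 1)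

/-! For `1 ≤ λ ≤ x`, discarding the part of `∫₁ˣ dv/(v l(v))` over `[1, x/λ]` and substituting
`v = u x` gives `l(x) ∫₁ˣ dv/(v l(v)) ≥ ∫_{1/λ}^1 l(x)/(u l(ux)) du`. By slow variation the integrand
tends to `1/u` pointwise, so Fatou's lemma bounds the lim inf of the left side below by `log λ`,
for every `λ`. -/

open scoped ENNReal

theorem MeasureTheory.lintegral_liminf_le_of_eventually_aemeasurable {α ι : Type*}
    [MeasurableSpace α] {μ : Measure α} {f : ι → α → ℝ≥0∞} {u : Filter ι}
    [IsCountablyGenerated u] (h_meas : ∀ᶠ i in u, AEMeasurable (f i) μ) :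
    ∫⁻ a, liminf (fun i => f i a) u ∂μ ≤ liminf (fun i => ∫⁻ a, f i a ∂μ) u := by
  classical
  set g : ι → α → ℝ≥0∞ := fun i => if AEMeasurable (f i) μ then f i else 0
  have hfg : ∀ᶠ i in u, f i = g i := h_meas.mono fun i hi => (if_pos hi).symm
  have hg_meas : ∀ i, AEMeasurable (g i) μ := fun i => by
    by_cases hi : AEMeasurable (f i) μ
    · simpa only [g, if_pos hi] using hi
    · simp only [g, if_neg hi]
      exact aemeasurable_const
  calc ∫⁻ a, liminf (fun i => f i a) u ∂μ = ∫⁻ a, liminf (fun i => g i a) u ∂μ := by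
        congr with a
        exact liminf_congr (hfg.mono fun i hi => congrFun hi a)
    _ ≤ liminf (fun i => ∫⁻ a, g i a ∂μ) u := lintegral_liminf_le' hg_meas
    _ = liminf (fun i => ∫⁻ a, f i a ∂μ) u := liminf_congr (hfg.mono fun i hi => by rw [hi])

theorem SlowlyVarying.tendsto_div_mul_comp_mul {l : ℝ → ℝ} (hsv : SlowlyVarying l)
    {u : ℝ} (hu : 0 < u) :
    Tendsto (fun x => l x / (u * l (u * x))) atTop (nhds u⁻¹) := by
  have h := ((hsv u hu).inv₀ one_ne_zero).const_mul u⁻¹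
  rw [inv_one, mul_one] at h
  refine h.congr fun x => ?_
  simp only [div_eq_mul_inv, mul_inv, inv_inv]
  ring

theorem continuousOn_div_mul_comp_mul {l : ℝ → ℝ} (hcont : ContinuousOn l (Ici 0))
    (hpos : ∀ x ∈ Ici (0 : ℝ), 0 < l x) {x : ℝ} (hx : 0 ≤ x) :
    ContinuousOn (fun u => l x / (u * l (u * x))) (Ioi 0) := by
  refine continuousOn_const.div (continuousOn_id.mul (hcont.comp
    (continuousOn_id.mul continuousOn_const) fun u hu => ?_)) fun u hu => ?_
  · exact mul_nonneg (le_of_lt hu) hx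
  · exact (mul_pos hu (hpos _ (mul_nonneg (le_of_lt hu) hx))).ne'

theorem integral_div_mul_comp_mul (l : ℝ → ℝ) {x : ℝ} (hx : x ≠ 0) (a b : ℝ) :
    ∫ u in a..b, l x / (u * l (u * x)) = l x * ∫ v in a * x..b * x, (v * l v)⁻¹ := by
  have h := integral_comp_mul_right (fun v => (v * l v)⁻¹) hx (a := a) (b := b)
  calc ∫ u in a..b, l x / (u * l (u * x))
      = ∫ u in a..b, (l x * x) * ((u * x) * l (u * x))⁻¹ :=
        integral_congr fun u _ => by field_simp
    _ = l x * ∫ v in a * x..b * x, (v * l v)⁻¹ := by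
        rw [intervalIntegral.integral_const_mul, h, smul_eq_mul, mul_assoc, mul_inv_cancel_left₀ hx]

theorem setLIntegral_Ioc_ofReal_inv {a b : ℝ} (ha : 0 < a) (hab : a ≤ b) :
    ∫⁻ u in Ioc a b, ENNReal.ofReal u⁻¹ = ENNReal.ofReal (Real.log (b / a)) := by
  have hint : IntegrableOn (fun u : ℝ => u⁻¹) (Ioc a b) :=
    ((continuousOn_inv₀.mono fun u hu => (ha.trans_le hu.1).ne').integrableOn_Icc).mono_set
      Ioc_subset_Icc_self
  have hnonneg : 0 ≤ᵐ[volume.restrict (Ioc a b)] fun u : ℝ => u⁻¹ :=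
    ae_restrict_of_forall_mem measurableSet_Ioc fun u hu => (inv_pos.2 (ha.trans hu.1)).le
  rw [← ofReal_integral_eq_lintegral_ofReal hint hnonneg, ← integral_of_le hab,
    integral_inv_of_pos ha (ha.trans_le hab)]

theorem lintegral_div_mul_comp_mul_le {l : ℝ → ℝ} (hcont : ContinuousOn l (Ici 0))
    (hpos : ∀ x ∈ Ici (0 : ℝ), 0 < l x) {lam x : ℝ} (hlam : 1 ≤ lam) (hx : lam ≤ x) :
    ∫⁻ u in Ioc lam⁻¹ 1, ENNReal.ofReal (l x / (u * l (u * x))) ≤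
      ENNReal.ofReal (l x * ∫ v in (1 : ℝ)..x, (v * l v)⁻¹) := by
  have hlam₀ : 0 < lam⁻¹ := inv_pos.2 (zero_lt_one.trans_le hlam)
  have hlam₁ : lam⁻¹ ≤ 1 := inv_le_one_of_one_le₀ hlam
  have hx₀ : 0 < x := zero_lt_one.trans_le (hlam.trans hx)
  have hint : IntegrableOn (fun u => l x / (u * l (u * x))) (Ioc lam⁻¹ 1) :=
    (((continuousOn_div_mul_comp_mul hcont hpos hx₀.le).mono fun u hu =>
      hlam₀.trans_le hu.1).integrableOn_Icc).mono_set Ioc_subset_Icc_self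
  have hnonneg : 0 ≤ᵐ[volume.restrict (Ioc lam⁻¹ 1)] fun u => l x / (u * l (u * x)) :=
    ae_restrict_of_forall_mem measurableSet_Ioc fun u hu =>
      have hu : 0 < u := hlam₀.trans hu.1
      (div_pos (hpos x hx₀.le) (mul_pos hu (hpos _ (mul_pos hu hx₀).le))).le
  have hg_cont : ContinuousOn (fun v => (v * l v)⁻¹) (Icc 1 x) :=
    (continuousOn_id.mul (hcont.mono fun v hv => zero_le_one.trans hv.1)).inv₀ fun v hv =>
      (mul_pos (zero_lt_one.trans_le hv.1) (hpos v (zero_le_one.trans hv.1))).ne'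
  have hg_nonneg : 0 ≤ᵐ[volume.restrict (Ioc 1 x)] fun v => (v * l v)⁻¹ :=
    ae_restrict_of_forall_mem measurableSet_Ioc fun v hv =>
      have hv : 0 < v := zero_lt_one.trans hv.1
      (inv_pos.2 (mul_pos hv (hpos v hv.le))).le
  rw [← ofReal_integral_eq_lintegral_ofReal hint hnonneg, ← integral_of_le hlam₁,
    integral_div_mul_comp_mul l hx₀.ne', one_mul]
  refine ENNReal.ofReal_le_ofReal (mul_le_mul_of_nonneg_left ?_ (hpos x hx₀.le).le)
  refine integral_mono_interval ?_ ?_ le_rfl hg_nonneg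
    (hg_cont.intervalIntegrable_of_Icc (hlam.trans hx))
  · rwa [inv_mul_eq_div, one_le_div₀ (zero_lt_one.trans_le hlam)]
  · exact mul_le_of_le_one_left hx₀.le hlam₁

theorem SlowlyVarying.ofReal_log_le_liminf {l : ℝ → ℝ} (hcont : ContinuousOn l (Ici 0))
    (hpos : ∀ x ∈ Ici (0 : ℝ), 0 < l x) (hsv : SlowlyVarying l) {lam : ℝ} (hlam : 1 ≤ lam) :
    ENNReal.ofReal (Real.log lam) ≤
      liminf (fun x => ENNReal.ofReal (l x * ∫ v in (1 : ℝ)..x, (v * l v)⁻¹)) atTop := by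
  have hlam₀ : 0 < lam⁻¹ := inv_pos.2 (zero_lt_one.trans_le hlam)
  -- `l` is only known on `[0, ∞)`, so the integrands are measurable only for `x ≥ 0`.
  have hmeas : ∀ᶠ x in atTop,
      AEMeasurable (fun u => ENNReal.ofReal (l x / (u * l (u * x))))
        (volume.restrict (Ioc lam⁻¹ 1)) :=
    (eventually_ge_atTop 0).mono fun x hx => ENNReal.measurable_ofReal.comp_aemeasurable
      (((continuousOn_div_mul_comp_mul hcont hpos hx).mono fun u hu =>
        hlam₀.trans hu.1).aemeasurable measurableSet_Ioc)
  calc ENNReal.ofReal (Real.log lam)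
      = ∫⁻ u in Ioc lam⁻¹ 1, ENNReal.ofReal u⁻¹ := by
        rw [setLIntegral_Ioc_ofReal_inv hlam₀ (inv_le_one_of_one_le₀ hlam), one_div, inv_inv]
    _ = ∫⁻ u in Ioc lam⁻¹ 1, liminf (fun x => ENNReal.ofReal (l x / (u * l (u * x)))) atTop :=
        setLIntegral_congr_fun measurableSet_Ioc fun u hu =>
          ((ENNReal.continuous_ofReal.tendsto _).comp
            (hsv.tendsto_div_mul_comp_mul (hlam₀.trans hu.1))).liminf_eq.symm
    _ ≤ liminf (fun x => ∫⁻ u in Ioc lam⁻¹ 1, ENNReal.ofReal (l x / (u * l (u * x)))) atTop :=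
        lintegral_liminf_le_of_eventually_aemeasurable hmeas
    _ ≤ liminf (fun x => ENNReal.ofReal (l x * ∫ v in (1 : ℝ)..x, (v * l v)⁻¹)) atTop :=
        liminf_le_liminf ((eventually_ge_atTop lam).mono fun x hx =>
          lintegral_div_mul_comp_mul_le hcont hpos hlam hx)

/-- If `l` is a continuous slowly varying function, positive on `[0,∞)`, then
`l(x) · ∫₁ˣ dv/(v·l(v)) → ∞` as `x → ∞`. -/
theorem tendsto_atTop_mul_integral_inv_mul
    (l : ℝ → ℝ) (hcont : ContinuousOn l (Set.Ici 0))
    (hpos : ∀ x ∈ Set.Ici (0 : ℝ), 0 < l x)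
    (hsv : SlowlyVarying l) :
    Tendsto (fun x => l x * ∫ v in (1 : ℝ)..x, (v * l v)⁻¹) atTop atTop := by
  refine tendsto_atTop.2 fun M => ?_
  have hM : ENNReal.ofReal M < ENNReal.ofReal (Real.log (Real.exp (|M| + 1))) := by
    rw [Real.log_exp, ENNReal.ofReal_lt_ofReal_iff (by positivity)]
    linarith [le_abs_self M]
  filter_upwards [eventually_lt_of_lt_liminf (hM.trans_le
    (hsv.ofReal_log_le_liminf hcont hpos (Real.one_le_exp (by positivity))))] with x hx
  exact ((ENNReal.ofReal_lt_ofReal_iff'.1 hx).1).le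
end

section
/- Let ℓ : [0,∞) → (0,∞) be a continuous slowly varying function. Then the function M(x) = ∫₁ˣ (∫ᵥ^∞ du/(u^{3/2} ℓ(u)))² dv is slowly varying, and moreover ℓ(x)²·M(x) → ∞ as x → ∞. -/
/-!
Write `G(v) = ∫_v^∞ du / (u^{3/2} l(u))` and `M(x) = ∫_1^x G²`. Applied to the continuous function
`H = log ∘ l ∘ exp`, a Baire category argument gives Karamata's uniform convergence theorem and
Potter's bound `|log l(u) - log l(x)| ≤ ε (log (u / x) + 1)` for `u ≥ x ≫ 1`. Potter's bound lets
us compare the integrand of `G` with a power, and uniform convergence compares it with a constant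
on `[v, 2v]`; together they give `G(v)² ≍ 1 / (v l(v)²)`.

Since `l` is almost constant on `[x / Λ, x]`, `M(x) ≥ ∫_{x/Λ}^x G² ≳ log Λ / l(x)²` for every `Λ`,
so `l(x)² M(x) → ∞`. On the other hand `G` is antitone, so `|M(λx) - M(x)| ≲ 1 / l(x)²`, which is
therefore `o(M(x))`: `M` is slowly varying.
-/

open Filter MeasureTheory Set intervalIntegral

open Real Topology Asymptotics
open scoped Interval

section UniformConvergence

variable {H : ℝ → ℝ}

lemma eventually_abs_sub_le_of_tendsto_sub {t : ℝ}
    (hlim : Tendsto (fun x => H (x + t) - H x) atTop (𝓝 0)) {ε : ℝ} (hε : 0 < ε) :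
    ∀ᶠ x in atTop, |H (x + t) - H x| ≤ ε := by
  simpa using hlim.eventually (Metric.closedBall_mem_nhds 0 hε)

/-- The closed sets of shifts that are `ε / 2`-good beyond `n` cover `ℝ`, so by Baire one of them
contains an interval `[a, a + r]`; every shift in `[0, r]` is a difference of two of its points. -/
lemma exists_pos_eventually_forall_Icc_abs_sub_le (hH : Continuous H)
    (hlim : ∀ t, Tendsto (fun x => H (x + t) - H x) atTop (𝓝 0)) {ε : ℝ} (hε : 0 < ε) :
    ∃ s > 0, ∀ᶠ x in atTop, ∀ t ∈ Icc 0 s, |H (x + t) - H x| ≤ ε := by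
  let E : ℕ → Set ℝ := fun n => ⋂ x ∈ Ici (n : ℝ), {t | |H (x + t) - H x| ≤ ε / 2}
  have hclosed : ∀ n, IsClosed (E n) := fun n =>
    isClosed_biInter fun x _ => isClosed_le (by fun_prop) continuous_const
  have hcover : ⋃ n, E n = univ := by
    refine eq_univ_of_forall fun t => mem_iUnion.2 ?_
    obtain ⟨X, hX⟩ :=
      eventually_atTop.1 (eventually_abs_sub_le_of_tendsto_sub (hlim t) (half_pos hε))
    obtain ⟨n, hn⟩ := exists_nat_ge X
    exact ⟨n, mem_iInter₂.2 fun x hx => hX x (hn.trans hx)⟩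
  obtain ⟨n, t₀, ht₀⟩ := nonempty_interior_of_iUnion_of_closed hclosed hcover
  obtain ⟨r, hr, hball⟩ := Metric.mem_nhds_iff.1 (mem_interior_iff_mem_nhds.1 ht₀)
  obtain ⟨a, rfl⟩ : ∃ a, t₀ = a + r / 2 := ⟨t₀ - r / 2, by ring⟩
  have hgood : ∀ t ∈ Icc 0 r, ∀ y ≥ (n : ℝ), |H (y + (a + t)) - H y| ≤ ε / 2 := by
    intro t ht y hy
    have hat : a + t ∈ E n := hball <| by
      rw [Metric.mem_ball, Real.dist_eq, abs_lt]
      constructor <;> linarith [ht.1, ht.2]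
    exact mem_iInter₂.1 hat y hy
  refine ⟨r, hr, eventually_atTop.2 ⟨n + |a|, fun x hx t ht => ?_⟩⟩
  have hxa : (n : ℝ) ≤ x - a := by linarith [le_abs_self a]
  have h₁ := hgood t ht (x - a) hxa
  have h₀ := hgood 0 ⟨le_rfl, hr.le⟩ (x - a) hxa
  rw [show x - a + (a + t) = x + t by ring] at h₁
  rw [show x - a + (a + 0) = x by ring] at h₀
  calc |H (x + t) - H x| = |(H (x + t) - H (x - a)) - (H x - H (x - a))| := by ring_nf
    _ ≤ ε / 2 + ε / 2 := (abs_sub _ _).trans (add_le_add h₁ h₀)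
    _ = ε := add_halves ε

/-- Pointwise convergence at the finitely many grid points `i * s ∈ [0, T]` plus the uniformity
on steps of length at most `s`. -/
lemma eventually_forall_Icc_abs_sub_le (hH : Continuous H)
    (hlim : ∀ t, Tendsto (fun x => H (x + t) - H x) atTop (𝓝 0)) {ε : ℝ} (hε : 0 < ε)
    (T : ℝ) : ∀ᶠ x in atTop, ∀ t ∈ Icc 0 T, |H (x + t) - H x| ≤ ε := by
  obtain ⟨s, hs, hsmall⟩ := exists_pos_eventually_forall_Icc_abs_sub_le hH hlim (half_pos hε)
  set N := ⌈T / s⌉₊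
  have hgrid : ∀ᶠ x in atTop, ∀ i ∈ Finset.range (N + 1), |H (x + i * s) - H x| ≤ ε / 2 :=
    (Finset.eventually_all _).2 fun _ _ =>
      eventually_abs_sub_le_of_tendsto_sub (hlim _) (half_pos hε)
  filter_upwards [hgrid, eventually_forall_ge_atTop.2 hsmall] with x hgrid hsmall t ht
  set i := ⌊t / s⌋₊
  have his : i * s ≤ t := (le_div_iff₀ hs).1 (Nat.floor_le (div_nonneg ht.1 hs.le))
  have hsi : t < i * s + s := by
    have := Nat.lt_floor_add_one (t / s)
    rw [div_lt_iff₀ hs] at this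
    linarith
  have hiN : i ≤ N := Nat.floor_le_ceil _ |>.trans (Nat.ceil_mono (by gcongr; exact ht.2))
  have h₁ := hsmall (x + i * s) (by linarith [mul_nonneg i.cast_nonneg hs.le])
    (t - i * s) ⟨by linarith, by linarith⟩
  rw [add_add_sub_cancel] at h₁
  calc |H (x + t) - H x| = |(H (x + t) - H (x + i * s)) + (H (x + i * s) - H x)| := by ring_nf
    _ ≤ ε / 2 + ε / 2 :=
      (abs_add_le _ _).trans (add_le_add h₁ (hgrid i (Finset.mem_range_succ_iff.2 hiN)))
    _ = ε := add_halves ε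

lemma eventually_abs_sub_le_mul_add_one (hH : Continuous H)
    (hlim : ∀ t, Tendsto (fun x => H (x + t) - H x) atTop (𝓝 0)) {ε : ℝ} (hε : 0 < ε) :
    ∀ᶠ x in atTop, ∀ t, 0 ≤ t → |H (x + t) - H x| ≤ ε * (t + 1) := by
  obtain ⟨X, hX⟩ := eventually_atTop.1 (eventually_forall_Icc_abs_sub_le hH hlim hε 1)
  have hsteps : ∀ n : ℕ, ∀ x ≥ X, ∀ t ∈ Icc 0 ((n : ℝ) + 1),
      |H (x + t) - H x| ≤ ε * (n + 1) := by
    intro n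
    induction n with
    | zero => simpa using hX
    | succ n ih =>
      intro x hx t ht
      rcases le_or_gt t 1 with ht1 | ht1
      · refine (hX x hx t ⟨ht.1, ht1⟩).trans ?_
        push_cast
        nlinarith [n.cast_nonneg (α := ℝ)]
      · have h₁ := ih (x + 1) (by linarith) (t - 1)
          ⟨by linarith, by push_cast at ht; linarith [ht.2]⟩
        rw [add_add_sub_cancel] at h₁
        calc |H (x + t) - H x| = |(H (x + t) - H (x + 1)) + (H (x + 1) - H x)| := by ring_nf
          _ ≤ ε * (n + 1) + ε :=
            (abs_add_le _ _).trans (add_le_add h₁ (hX x hx 1 ⟨zero_le_one, le_rfl⟩))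
          _ = ε * ((n + 1 : ℕ) + 1) := by push_cast; ring
  refine eventually_atTop.2 ⟨X, fun x hx t ht => ?_⟩
  refine (hsteps ⌊t⌋₊ x hx t ⟨ht, (Nat.lt_floor_add_one t).le⟩).trans ?_
  exact mul_le_mul_of_nonneg_left (by linarith [Nat.floor_le ht]) hε.le

end UniformConvergence

namespace SlowlyVarying

variable {l : ℝ → ℝ}

lemma tendsto_log_comp_exp_sub (hpos : ∀ x ∈ Ioi 0, 0 < l x) (hsv : SlowlyVarying l) (t : ℝ) :
    Tendsto (fun y => log (l (exp (y + t))) - log (l (exp y))) atTop (𝓝 0) := by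
  have h := ((continuousAt_log one_ne_zero).tendsto.comp
    ((hsv (exp t) (exp_pos t)).comp tendsto_exp_atTop))
  rw [log_one] at h
  refine h.congr fun y => ?_
  simp only [Function.comp_apply]
  rw [log_div (hpos _ (mem_Ioi.2 (by positivity))).ne' (hpos _ (exp_pos y)).ne', exp_add,
    mul_comm]

/-- Potter's bound. -/
lemma eventually_abs_log_sub_le (hcont : ContinuousOn l (Ioi 0)) (hpos : ∀ x ∈ Ioi 0, 0 < l x)
    (hsv : SlowlyVarying l) {ε : ℝ} (hε : 0 < ε) :
    ∀ᶠ x in atTop, ∀ u, x ≤ u → |log (l u) - log (l x)| ≤ ε * (log u - log x + 1) := by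
  have hH : Continuous fun y => log (l (exp y)) :=
    ContinuousOn.comp_continuous (continuousOn_log.comp hcont fun x hx => (hpos x hx).ne')
      continuous_exp fun y => exp_pos y
  have h := eventually_abs_sub_le_mul_add_one hH (hsv.tendsto_log_comp_exp_sub hpos) hε
  filter_upwards [tendsto_log_atTop.eventually h, eventually_gt_atTop 0] with x hx hx0 u hxu
  have hu0 := hx0.trans_le hxu
  simpa [exp_log hx0, exp_log hu0] using hx (log u - log x) (sub_nonneg.2 (log_le_log hx0 hxu))

/-- Karamata's uniform convergence theorem. -/
lemma eventually_forall_Icc_abs_log_sub_le (hcont : ContinuousOn l (Ioi 0))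
    (hpos : ∀ x ∈ Ioi 0, 0 < l x) (hsv : SlowlyVarying l) {Λ ε : ℝ} (hΛ : 1 ≤ Λ)
    (hε : 0 < ε) :
    ∀ᶠ x in atTop, ∀ u ∈ Icc x (Λ * x), |log (l u) - log (l x)| ≤ ε := by
  have hL : 0 < log Λ + 1 := by linarith [log_nonneg hΛ]
  filter_upwards [hsv.eventually_abs_log_sub_le hcont hpos (div_pos hε hL),
    eventually_gt_atTop 0] with x hx hx0 u hu
  have hlog : log u - log x ≤ log Λ := by
    have := log_le_log (hx0.trans_le hu.1) hu.2
    rw [log_mul (zero_lt_one.trans_le hΛ).ne' hx0.ne'] at this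
    linarith
  calc |log (l u) - log (l x)| ≤ ε / (log Λ + 1) * (log u - log x + 1) := hx u hu.1
    _ ≤ ε / (log Λ + 1) * (log Λ + 1) := by gcongr
    _ = ε := div_mul_cancel₀ ε hL.ne'

lemma eventually_forall_Icc_le_exp_mul (hcont : ContinuousOn l (Ioi 0))
    (hpos : ∀ x ∈ Ioi 0, 0 < l x) (hsv : SlowlyVarying l) {Λ ε : ℝ} (hΛ : 1 ≤ Λ)
    (hε : 0 < ε) :
    ∀ᶠ x in atTop, ∀ u ∈ Icc x (Λ * x), ∀ w ∈ Icc x (Λ * x), l u ≤ exp ε * l w := by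
  filter_upwards [hsv.eventually_forall_Icc_abs_log_sub_le hcont hpos hΛ (half_pos hε),
    eventually_gt_atTop 0] with x hx hx0 u hu w hw
  have hlw := hpos w (hx0.trans_le hw.1)
  rw [← log_le_log_iff (hpos u (hx0.trans_le hu.1)) (mul_pos (exp_pos ε) hlw),
    log_mul (exp_pos ε).ne' hlw.ne', log_exp]
  linarith [(abs_le.1 (hx u hu)).2, (abs_le.1 (hx w hw)).1]

end SlowlyVarying

noncomputable def tailIntegral (l : ℝ → ℝ) (p v : ℝ) : ℝ := ∫ u in Ioi v, (u ^ p * l u)⁻¹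

section TailIntegral

variable {l : ℝ → ℝ} {p : ℝ}

lemma inv_rpow_mul_pos (hpos : ∀ x ∈ Ioi 0, 0 < l x) {u : ℝ} (hu : 0 < u) :
    0 < (u ^ p * l u)⁻¹ :=
  inv_pos.2 (mul_pos (rpow_pos_of_pos hu p) (hpos u hu))

lemma continuousOn_inv_rpow_mul (hcont : ContinuousOn l (Ioi 0)) (hpos : ∀ x ∈ Ioi 0, 0 < l x) :
    ContinuousOn (fun u => (u ^ p * l u)⁻¹) (Ioi 0) :=
  ((continuousOn_id.rpow_const fun _ hu => Or.inl (ne_of_gt hu)).mul hcont).inv₀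
    fun u hu => (mul_pos (rpow_pos_of_pos hu p) (hpos u hu)).ne'

lemma tailIntegral_nonneg (hpos : ∀ x ∈ Ioi 0, 0 < l x) {v : ℝ} (hv : 0 ≤ v) :
    0 ≤ tailIntegral l p v :=
  setIntegral_nonneg measurableSet_Ioi fun _ hu => (inv_rpow_mul_pos hpos (hv.trans_lt hu)).le

lemma SlowlyVarying.eventually_inv_rpow_mul_le (hcont : ContinuousOn l (Ioi 0))
    (hpos : ∀ x ∈ Ioi 0, 0 < l x) (hsv : SlowlyVarying l) {ε : ℝ} (hε : 0 < ε) :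
    ∀ᶠ v in atTop, 0 < v ∧
      ∀ u, v ≤ u → (u ^ p * l u)⁻¹ ≤ exp ε * v ^ (-ε) / l v * u ^ (ε - p) := by
  filter_upwards [hsv.eventually_abs_log_sub_le hcont hpos hε, eventually_gt_atTop 0]
    with v hv hv0
  refine ⟨hv0, fun u hvu => ?_⟩
  have hu0 := hv0.trans_le hvu
  have hlv := hpos v hv0
  have hlu := hpos u hu0
  rw [← log_le_log_iff (by positivity) (by positivity), log_inv,
    log_mul (by positivity) hlu.ne', log_mul (by positivity) (by positivity),
    log_div (by positivity) hlv.ne', log_mul (by positivity) (by positivity), log_exp,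
    log_rpow hu0, log_rpow hv0, log_rpow hu0]
  linarith [(abs_le.1 (hv u hvu)).1]

lemma SlowlyVarying.integrableOn_Ioi_inv_rpow_mul (hcont : ContinuousOn l (Ioi 0))
    (hpos : ∀ x ∈ Ioi 0, 0 < l x) (hsv : SlowlyVarying l) (hp : 1 < p) {v : ℝ} (hv : 0 < v) :
    IntegrableOn (fun u => (u ^ p * l u)⁻¹) (Ioi v) := by
  set ε := (p - 1) / 2 with hε_def
  obtain ⟨V, hV0, hV⟩ := (hsv.eventually_inv_rpow_mul_le hcont hpos (p := p)
    (half_pos (sub_pos.2 hp))).exists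
  have hlocal : LocallyIntegrableOn (fun u => (u ^ p * l u)⁻¹) (Ici v) :=
    ((continuousOn_inv_rpow_mul hcont hpos).mono fun u hu => hv.trans_le hu).locallyIntegrableOn
      measurableSet_Ici
  refine (hlocal.integrableOn_of_isBigO_atTop (g := fun u => u ^ (ε - p)) ?_
    ⟨Ioi 1, Ioi_mem_atTop 1, integrableOn_Ioi_rpow_of_lt (by linarith) one_pos⟩).mono_set
    Ioi_subset_Ici_self
  refine IsBigO.of_bound (exp ε * V ^ (-ε) / l V) ?_
  filter_upwards [eventually_ge_atTop V] with u hu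
  have hu0 := hV0.trans_le hu
  rw [norm_of_nonneg (inv_rpow_mul_pos hpos hu0).le, norm_of_nonneg (rpow_pos_of_pos hu0 _).le]
  exact hV u hu

lemma SlowlyVarying.antitoneOn_tailIntegral (hcont : ContinuousOn l (Ioi 0))
    (hpos : ∀ x ∈ Ioi 0, 0 < l x) (hsv : SlowlyVarying l) (hp : 1 < p) :
    AntitoneOn (tailIntegral l p) (Ioi 0) := by
  intro a ha b _ hab
  refine setIntegral_mono_set (hsv.integrableOn_Ioi_inv_rpow_mul hcont hpos hp ha) ?_
    (Ioi_subset_Ioi hab).eventuallyLE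
  filter_upwards [ae_restrict_mem measurableSet_Ioi] with u hu
  exact (inv_rpow_mul_pos hpos (lt_trans ha hu)).le

lemma SlowlyVarying.intervalIntegrable_sq_tailIntegral (hcont : ContinuousOn l (Ioi 0))
    (hpos : ∀ x ∈ Ioi 0, 0 < l x) (hsv : SlowlyVarying l) (hp : 1 < p) {a b : ℝ}
    (ha : 0 < a) (hb : 0 < b) :
    IntervalIntegrable (fun v => tailIntegral l p v ^ 2) volume a b := by
  refine AntitoneOn.intervalIntegrable fun x hx y hy hxy => ?_
  have hy0 : 0 < y := (lt_min ha hb).trans_le hy.1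
  exact pow_le_pow_left₀ (tailIntegral_nonneg hpos hy0.le)
    (hsv.antitoneOn_tailIntegral hcont hpos hp ((lt_min ha hb).trans_le hx.1) hy0 hxy) 2

lemma SlowlyVarying.tailIntegral_le (hcont : ContinuousOn l (Ioi 0))
    (hpos : ∀ x ∈ Ioi 0, 0 < l x) (hsv : SlowlyVarying l) (hp : 1 < p) :
    ∃ C > 0, ∀ᶠ v in atTop, tailIntegral l p v ≤ C * (v ^ (1 - p) / l v) := by
  set ε := (p - 1) / 2 with hε_def
  have hε : 0 < ε := half_pos (sub_pos.2 hp)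
  refine ⟨exp ε / ε, by positivity, ?_⟩
  filter_upwards [hsv.eventually_inv_rpow_mul_le hcont hpos (p := p) hε] with v ⟨hv0, hv⟩
  have hexp : ε - p < -1 := by linarith
  calc tailIntegral l p v ≤ ∫ u in Ioi v, exp ε * v ^ (-ε) / l v * u ^ (ε - p) :=
        setIntegral_mono_on (hsv.integrableOn_Ioi_inv_rpow_mul hcont hpos hp hv0)
          ((integrableOn_Ioi_rpow_of_lt hexp hv0).const_mul _) measurableSet_Ioi
          fun u hu => hv u (le_of_lt hu)
    _ = exp ε * v ^ (-ε) / l v * (-v ^ (ε - p + 1) / (ε - p + 1)) := by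
        rw [MeasureTheory.integral_const_mul, integral_Ioi_rpow_of_lt hexp hv0]
    _ = exp ε / ε * (v ^ (-ε) * v ^ (-ε) / l v) := by
        rw [show ε - p + 1 = -ε by linarith]
        field_simp
    _ = exp ε / ε * (v ^ (1 - p) / l v) := by
        rw [← rpow_add hv0, show -ε + -ε = 1 - p by linarith]

lemma SlowlyVarying.le_tailIntegral (hcont : ContinuousOn l (Ioi 0))
    (hpos : ∀ x ∈ Ioi 0, 0 < l x) (hsv : SlowlyVarying l) (hp : 1 < p) :
    ∃ c > 0, ∀ᶠ v in atTop, c * (v ^ (1 - p) / l v) ≤ tailIntegral l p v := by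
  refine ⟨2 ^ (-p) * exp (-1), by positivity, ?_⟩
  filter_upwards [hsv.eventually_forall_Icc_abs_log_sub_le hcont hpos one_le_two one_pos,
    eventually_gt_atTop 0] with v hv hv0
  have hlv := hpos v hv0
  have hlower : ∀ u ∈ Ioc v (2 * v), exp (-1) * (2 * v) ^ (-p) / l v ≤ (u ^ p * l u)⁻¹ := by
    intro u hu
    have hu0 := hv0.trans hu.1
    have hlu := hpos u hu0
    rw [← log_le_log_iff (by positivity) (by positivity), log_inv,
      log_mul (by positivity) hlu.ne', log_div (by positivity) hlv.ne',
      log_mul (by positivity) (by positivity), log_exp, log_rpow hu0, log_rpow (by positivity)]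
    have := log_le_log hu0 hu.2
    nlinarith [(abs_le.1 (hv u (Ioc_subset_Icc_self hu))).2]
  have hint := hsv.integrableOn_Ioi_inv_rpow_mul hcont hpos hp hv0
  calc 2 ^ (-p) * exp (-1) * (v ^ (1 - p) / l v)
      = exp (-1) * (2 * v) ^ (-p) / l v * volume.real (Ioc v (2 * v)) := by
        rw [volume_real_Ioc_of_le (by linarith), show 1 - p = 1 + -p by ring, rpow_add hv0,
          rpow_one, mul_rpow zero_le_two hv0.le]
        ring
    _ ≤ ∫ u in Ioc v (2 * v), (u ^ p * l u)⁻¹ :=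
        setIntegral_ge_of_const_le_real measurableSet_Ioc measure_Ioc_lt_top.ne hlower
          (hint.mono_set Ioc_subset_Ioi_self)
    _ ≤ tailIntegral l p v := by
        refine setIntegral_mono_set hint ?_ Ioc_subset_Ioi_self.eventuallyLE
        filter_upwards [ae_restrict_mem measurableSet_Ioi] with u hu
        exact (inv_rpow_mul_pos hpos (hv0.trans hu)).le

end TailIntegral

lemma slowlyVarying_of_isLittleO {M : ℝ → ℝ} (hM : ∀ᶠ x in atTop, M x ≠ 0)
    (h : ∀ lam, 0 < lam → (fun x => M (lam * x) - M x) =o[atTop] M) : SlowlyVarying M := by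
  intro lam hlam
  have hlim := ((h lam hlam).tendsto_div_nhds_zero).add_const 1
  rw [zero_add] at hlim
  refine hlim.congr' ?_
  filter_upwards [hM] with x hx
  field_simp
  ring

noncomputable def integralSqTail (l : ℝ → ℝ) (x : ℝ) : ℝ :=
  ∫ v in (1 : ℝ)..x, tailIntegral l (3 / 2) v ^ 2

lemma sq_rpow_one_sub_three_halves_div {v : ℝ} (hv : 0 < v) (a : ℝ) :
    (v ^ (1 - (3 : ℝ) / 2) / a) ^ 2 = 1 / (v * a ^ 2) := by
  rw [div_pow, ← rpow_natCast, ← rpow_mul hv.le]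
  norm_num [rpow_neg_one]
  ring

namespace SlowlyVarying

variable {l : ℝ → ℝ}

lemma sq_tailIntegral_le (hcont : ContinuousOn l (Ioi 0)) (hpos : ∀ x ∈ Ioi 0, 0 < l x)
    (hsv : SlowlyVarying l) :
    ∃ C > 0, ∀ᶠ v in atTop, tailIntegral l (3 / 2) v ^ 2 ≤ C / (v * l v ^ 2) := by
  obtain ⟨C, hC0, hC⟩ := hsv.tailIntegral_le hcont hpos (p := 3 / 2) (by norm_num)
  refine ⟨C ^ 2, by positivity, ?_⟩
  filter_upwards [hC, eventually_gt_atTop 0] with v hv hv0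
  calc tailIntegral l (3 / 2) v ^ 2 ≤ (C * (v ^ (1 - (3 : ℝ) / 2) / l v)) ^ 2 :=
        pow_le_pow_left₀ (tailIntegral_nonneg hpos hv0.le) hv 2
    _ = C ^ 2 / (v * l v ^ 2) := by rw [mul_pow, sq_rpow_one_sub_three_halves_div hv0]; ring

lemma le_sq_tailIntegral (hcont : ContinuousOn l (Ioi 0)) (hpos : ∀ x ∈ Ioi 0, 0 < l x)
    (hsv : SlowlyVarying l) :
    ∃ c > 0, ∀ᶠ v in atTop, c / (v * l v ^ 2) ≤ tailIntegral l (3 / 2) v ^ 2 := by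
  obtain ⟨c, hc, hcG⟩ := hsv.le_tailIntegral hcont hpos (p := 3 / 2) (by norm_num)
  refine ⟨c ^ 2, by positivity, ?_⟩
  filter_upwards [hcG, eventually_gt_atTop 0] with v hv hv0
  calc c ^ 2 / (v * l v ^ 2) = (c * (v ^ (1 - (3 : ℝ) / 2) / l v)) ^ 2 := by
        rw [mul_pow, sq_rpow_one_sub_three_halves_div hv0]; ring
    _ ≤ tailIntegral l (3 / 2) v ^ 2 :=
        pow_le_pow_left₀ (mul_nonneg hc.le (div_nonneg (by positivity) (hpos v hv0).le)) hv 2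

lemma integralSqTail_nonneg {x : ℝ} (hx : 1 ≤ x) : 0 ≤ integralSqTail l x :=
  intervalIntegral.integral_nonneg hx fun _ _ => sq_nonneg _

lemma integralSqTail_sub (hcont : ContinuousOn l (Ioi 0)) (hpos : ∀ x ∈ Ioi 0, 0 < l x)
    (hsv : SlowlyVarying l) {a b : ℝ} (ha : 0 < a) (hb : 0 < b) :
    integralSqTail l b - integralSqTail l a = ∫ v in a..b, tailIntegral l (3 / 2) v ^ 2 :=
  intervalIntegral.integral_interval_sub_left
    (hsv.intervalIntegrable_sq_tailIntegral hcont hpos (by norm_num) one_pos hb)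
    (hsv.intervalIntegrable_sq_tailIntegral hcont hpos (by norm_num) one_pos ha)

lemma norm_integral_sq_tailIntegral_le (hcont : ContinuousOn l (Ioi 0))
    (hpos : ∀ x ∈ Ioi 0, 0 < l x) (hsv : SlowlyVarying l) {a b : ℝ} (ha : 0 < a) (hb : 0 < b) :
    ‖∫ v in a..b, tailIntegral l (3 / 2) v ^ 2‖ ≤
      tailIntegral l (3 / 2) (min a b) ^ 2 * |b - a| := by
  refine intervalIntegral.norm_integral_le_of_norm_le_const fun v hv => ?_
  have hab : 0 < min a b := lt_min ha hb
  have hv : min a b ≤ v := (uIoc_subset_uIcc hv).1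
  rw [norm_of_nonneg (sq_nonneg _)]
  exact pow_le_pow_left₀ (tailIntegral_nonneg hpos (hab.le.trans hv))
    (hsv.antitoneOn_tailIntegral hcont hpos (by norm_num) hab (hab.trans_le hv) hv) 2

lemma tendsto_sq_mul_integralSqTail (hcont : ContinuousOn l (Ioi 0))
    (hpos : ∀ x ∈ Ioi 0, 0 < l x) (hsv : SlowlyVarying l) :
    Tendsto (fun x => l x ^ 2 * integralSqTail l x) atTop atTop := by
  obtain ⟨c, hc, hcG⟩ := hsv.le_sq_tailIntegral hcont hpos
  obtain ⟨V, hV⟩ := eventually_atTop.1 (hcG.and (eventually_ge_atTop 1))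
  refine tendsto_atTop.2 fun B => ?_
  set L := max B 0 * exp 1 ^ 2 / c
  have hL : 0 ≤ L := by positivity
  have hdiv : Tendsto (fun x => x / exp L) atTop atTop := tendsto_id.atTop_div_const (exp_pos L)
  filter_upwards [hdiv.eventually (hsv.eventually_forall_Icc_le_exp_mul hcont hpos
    (one_le_exp hL) one_pos), hdiv.eventually (eventually_ge_atTop V)] with x hxU hxV
  set y := x / exp L
  have hxy : x = exp L * y := by simp only [y]; field_simp
  have hy1 : 1 ≤ y := (hV y hxV).2
  have hy0 : 0 < y := one_pos.trans_le hy1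
  have hyx : y ≤ x := by rw [hxy]; exact le_mul_of_one_le_left hy0.le (one_le_exp hL)
  have hx0 : 0 < x := hy0.trans_le hyx
  set K := c / (exp 1 * l x) ^ 2
  have hpt : ∀ v ∈ Icc y x, K * v⁻¹ ≤ tailIntegral l (3 / 2) v ^ 2 := by
    intro v hv
    have hlvx : l v ≤ exp 1 * l x := hxU v ⟨hv.1, hxy ▸ hv.2⟩ x ⟨hyx, hxy.le⟩
    have hv0 : 0 < v := hy0.trans_le hv.1
    have := hpos v hv0
    calc K * v⁻¹ = c / (v * (exp 1 * l x) ^ 2) := by rw [div_mul_eq_mul_div, mul_comm v]; ring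
      _ ≤ c / (v * l v ^ 2) := by gcongr
      _ ≤ tailIntegral l (3 / 2) v ^ 2 := (hV v (hxV.trans hv.1)).1
  have hKint : IntervalIntegrable (fun v => K * v⁻¹) volume y x :=
    (intervalIntegrable_inv_iff.2 (Or.inr (notMem_uIcc_of_lt hy0 hx0))).const_mul K
  calc B ≤ max B 0 := le_max_left B 0
    _ = l x ^ 2 * (K * L) := by simp only [K, L]; field_simp [(hpos x hx0).ne']
    _ = l x ^ 2 * ∫ v in y..x, K * v⁻¹ := by
        rw [intervalIntegral.integral_const_mul, integral_inv_of_pos hy0 hx0, hxy,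
          mul_div_cancel_right₀ _ hy0.ne', log_exp]
    _ ≤ l x ^ 2 * ∫ v in y..x, tailIntegral l (3 / 2) v ^ 2 := by
        gcongr
        exact intervalIntegral.integral_mono_on hyx hKint
          (hsv.intervalIntegrable_sq_tailIntegral hcont hpos (by norm_num) hy0 hx0) hpt
    _ ≤ l x ^ 2 * integralSqTail l x := by
        gcongr
        rw [← hsv.integralSqTail_sub hcont hpos hy0 hx0]
        linarith [integralSqTail_nonneg (l := l) hy1]

lemma isBigO_integralSqTail_mul_sub (hcont : ContinuousOn l (Ioi 0))
    (hpos : ∀ x ∈ Ioi 0, 0 < l x) (hsv : SlowlyVarying l) {lam : ℝ} (hlam : 0 < lam) :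
    (fun x => integralSqTail l (lam * x) - integralSqTail l x) =O[atTop]
      fun x => (l x ^ 2)⁻¹ := by
  obtain ⟨C, hC0, hC⟩ := hsv.sq_tailIntegral_le hcont hpos
  set p := min 1 lam
  have hp0 : 0 < p := lt_min one_pos hlam
  have hp1 : p ≤ 1 := min_le_left 1 lam
  have hpx : Tendsto (fun x => p * x) atTop atTop := tendsto_id.const_mul_atTop hp0
  have hUCT := hsv.eventually_forall_Icc_le_exp_mul hcont hpos (one_le_inv₀ hp0 |>.2 hp1) one_pos
  refine IsBigO.of_bound (C * |lam - 1| / p * exp 1 ^ 2) ?_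
  filter_upwards [hpx.eventually hC, hpx.eventually hUCT, eventually_gt_atTop 0]
    with x hxC hxU hx0
  have hpx0 : 0 < p * x := mul_pos hp0 hx0
  have hlx := hpos x hx0
  have hpxx : p * x ≤ x := mul_le_of_le_one_left hx0.le hp1
  have hmem : x ∈ Icc (p * x) (p⁻¹ * (p * x)) := ⟨hpxx, (inv_mul_cancel_left₀ hp0.ne' x).ge⟩
  have hlxpx : l x ≤ exp 1 * l (p * x) := hxU x hmem (p * x) ⟨le_rfl, hpxx.trans hmem.2⟩
  have hmin : min x (lam * x) = p * x := by
    simpa only [one_mul] using (min_mul_of_nonneg 1 lam hx0.le).symm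
  rw [norm_of_nonneg (inv_nonneg.2 (sq_nonneg _)),
    hsv.integralSqTail_sub hcont hpos hx0 (mul_pos hlam hx0)]
  calc ‖∫ v in x..lam * x, tailIntegral l (3 / 2) v ^ 2‖
      ≤ tailIntegral l (3 / 2) (p * x) ^ 2 * |lam * x - x| := by
        simpa only [hmin] using
          hsv.norm_integral_sq_tailIntegral_le hcont hpos hx0 (mul_pos hlam hx0)
    _ ≤ C / (p * x * l (p * x) ^ 2) * |lam * x - x| := by gcongr
    _ = C * |lam - 1| / p * (l (p * x) ^ 2)⁻¹ := by
        rw [show lam * x - x = (lam - 1) * x by ring, abs_mul, abs_of_pos hx0]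
        field_simp
    _ = C * |lam - 1| / p * exp 1 ^ 2 * ((exp 1 * l (p * x)) ^ 2)⁻¹ := by
        rw [mul_pow, mul_inv, ← mul_assoc, mul_assoc _ (exp 1 ^ 2),
          mul_inv_cancel₀ (by positivity), mul_one]
    _ ≤ C * |lam - 1| / p * exp 1 ^ 2 * (l x ^ 2)⁻¹ := by gcongr

lemma slowlyVarying_integralSqTail (hcont : ContinuousOn l (Ioi 0))
    (hpos : ∀ x ∈ Ioi 0, 0 < l x) (hsv : SlowlyVarying l) :
    SlowlyVarying (integralSqTail l) := by
  have hT := hsv.tendsto_sq_mul_integralSqTail hcont hpos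
  have hM : ∀ᶠ x in atTop, integralSqTail l x ≠ 0 :=
    (hT.eventually_ne_atTop 0).mono fun x hx => right_ne_zero_of_mul hx
  have hsmall : (fun x => (l x ^ 2)⁻¹) =o[atTop] integralSqTail l := by
    rw [isLittleO_iff_tendsto' (hM.mono fun x hx h => absurd h hx)]
    exact hT.inv_tendsto_atTop.congr fun x => by
      rw [Pi.inv_apply, mul_inv, div_eq_mul_inv]
  exact slowlyVarying_of_isLittleO hM fun lam hlam =>
    (hsv.isBigO_integralSqTail_mul_sub hcont hpos hlam).trans_isLittleO hsmall

end SlowlyVarying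

/-- If `l` is a continuous slowly varying function, positive on `[0,∞)`, then
`M(x) = ∫₁ˣ (∫ᵥ^∞ du/(u^{3/2} l(u)))² dv` is slowly varying and
`l(x)² · M(x) → ∞` as `x → ∞`. -/
theorem slowlyVarying_M
    (l : ℝ → ℝ) (hcont : ContinuousOn l (Set.Ici 0))
    (hpos : ∀ x ∈ Set.Ici (0 : ℝ), 0 < l x)
    (hsv : SlowlyVarying l) :
    SlowlyVarying
        (fun x => ∫ v in (1 : ℝ)..x,
          (∫ u in Set.Ioi v, (u ^ ((3 : ℝ) / 2) * l u)⁻¹) ^ 2) ∧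
      Tendsto
        (fun x => (l x) ^ 2 * ∫ v in (1 : ℝ)..x,
          (∫ u in Set.Ioi v, (u ^ ((3 : ℝ) / 2) * l u)⁻¹) ^ 2)
        atTop atTop := by
  have hcont' : ContinuousOn l (Ioi 0) := hcont.mono Ioi_subset_Ici_self
  have hpos' : ∀ x ∈ Ioi (0 : ℝ), 0 < l x := fun x hx => hpos x (Ioi_subset_Ici_self hx)
  exact ⟨hsv.slowlyVarying_integralSqTail hcont' hpos',
    hsv.tendsto_sq_mul_integralSqTail hcont' hpos'⟩
end

section
/- Let b, σ be continuous with σ > 0, let 𝔰 be the scale function and m(x) = [σ²(x)𝔰'(x)]^{-1} the speed measure density with κ^{-1} = ∫_ℝ m(x)dx < ∞, and let μ(dx) = κ m(x)dx. Let f : ℝ → ℝ be Borel, locally bounded, and suppose there exist α > 1, real numbers f₊, f₋ with |f₊|+|f₋| > 0, and a continuous slowly varying function ℓ such that [σ(x)𝔰'(x)]^{-2}|𝔰(x)|^{2−1/α}ℓ(|𝔰(x)|)f(x) → f₊ as x → +∞ and → f₋ as x → −∞. Then f is integrable with respect to μ. -/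
open Filter MeasureTheory Set intervalIntegral

/-!
Since `m = (σ² 𝔰')⁻¹`, the hypothesis says that `|𝔰|^(2 - 1/α) ℓ(|𝔰|) f m / 𝔰'` has finite limits
at `±∞`. A Potter bound `ℓ(t) ≥ c t^(-ρ)` with `ρ = (1 - 1/α)/2` then gives
`|f m| ≤ C 𝔰' |𝔰|^(-(1+ρ))` near `±∞`, and the right-hand side is the derivative of
`∓ C |𝔰|^(-ρ)/ρ`, which has a limit since `𝔰(±∞) = ±∞`; so `f m` is integrable at both ends.
On compact sets `f m` is bounded, and `μ` has density `κ m`.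
-/

lemma le_of_le_on_Icc_of_le_comp_two_mul {g : ℝ → ℝ} {X c : ℝ} (hX : 0 < X)
    (hdouble : ∀ x, X ≤ x → g x ≤ g (2 * x)) (hbase : ∀ x ∈ Icc X (2 * X), c ≤ g x) :
    ∀ x, X ≤ x → c ≤ g x := by
  have hdyadic : ∀ n : ℕ, ∀ x, X ≤ x → x ≤ 2 ^ n * X → c ≤ g x := by
    intro n
    induction n with
    | zero => exact fun x hXx hxX => hbase x ⟨hXx, by linarith⟩
    | succ n ih =>
      intro x hXx hxX
      rcases le_or_gt x (2 * X) with hx | hx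
      · exact hbase x ⟨hXx, hx⟩
      · have hhalf : c ≤ g (x / 2) := ih (x / 2) (by linarith) (by rw [pow_succ] at hxX; linarith)
        simpa [mul_div_cancel₀] using hhalf.trans (hdouble (x / 2) (by linarith))
  intro x hXx
  obtain ⟨n, hn⟩ := pow_unbounded_of_one_lt (x / X) one_lt_two
  exact hdyadic n x hXx ((div_lt_iff₀ hX).1 hn).le

/-- Potter's bound, from the case `λ = 2` of slow variation and the minimum of `t^ρ ℓ(t)` on one
dyadic block. -/
lemma SlowlyVarying.exists_pos_le_rpow_mul {l : ℝ → ℝ} (hlsv : SlowlyVarying l)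
    (hlcont : ContinuousOn l (Ici 0)) (hlpos : ∀ x ∈ Ici (0 : ℝ), 0 < l x) {ρ : ℝ} (hρ : 0 < ρ) :
    ∃ c > 0, ∀ᶠ t in atTop, c ≤ t ^ ρ * l t := by
  have hratio : ∀ᶠ x in atTop, (2 : ℝ) ^ (-ρ) < l (2 * x) / l x :=
    (hlsv 2 two_pos).eventually (eventually_gt_nhds (Real.rpow_lt_one_of_one_lt_of_neg one_lt_two
      (neg_neg_of_pos hρ)))
  obtain ⟨X, hX⟩ := (hratio.and (eventually_gt_atTop 0)).exists_forall_of_atTop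
  have hdouble : ∀ x, X ≤ x → x ^ ρ * l x ≤ (2 * x) ^ ρ * l (2 * x) := by
    intro x hx
    obtain ⟨hlt, hx0⟩ := hX x hx
    have hlx := hlpos x hx0.le
    rw [lt_div_iff₀ hlx, Real.rpow_neg zero_le_two] at hlt
    have h2ρ : 0 < (2 : ℝ) ^ ρ := by positivity
    rw [Real.mul_rpow zero_le_two hx0.le]
    have := mul_le_mul_of_nonneg_left ((inv_mul_le_iff₀ h2ρ).1 hlt.le)
      (Real.rpow_nonneg hx0.le ρ)
    linarith
  have hX0 : 0 < X := (hX X le_rfl).2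
  have hcont : ContinuousOn (fun t => t ^ ρ * l t) (Icc X (2 * X)) :=
    ((continuousOn_id.rpow_const fun _ _ => Or.inr hρ.le).mul hlcont).mono
      fun t ht => (mem_Ici.2 (hX0.le.trans ht.1))
  obtain ⟨x₀, hx₀, hmin⟩ := isCompact_Icc.exists_isMinOn (nonempty_Icc.2 (by linarith)) hcont
  have hx₀pos : 0 < x₀ := hX0.trans_le hx₀.1
  refine ⟨x₀ ^ ρ * l x₀, mul_pos (Real.rpow_pos_of_pos hx₀pos ρ) (hlpos x₀ hx₀pos.le), ?_⟩
  exact eventually_atTop.2 ⟨X, le_of_le_on_Icc_of_le_comp_two_mul hX0 hdouble fun x hx => hmin hx⟩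

lemma integrableAtFilter_deriv_mul_rpow_neg {s E : ℝ → ℝ} {ρ : ℝ} (hρ : 0 < ρ)
    (hs : ∀ x, HasDerivAt s (E x) x) (hE : ∀ x, 0 ≤ E x) (hs_top : Tendsto s atTop atTop) :
    IntegrableAtFilter (fun x => E x * s x ^ (-(1 + ρ))) atTop := by
  obtain ⟨a, ha⟩ := eventually_atTop.1 (hs_top.eventually_gt_atTop 0)
  have hderiv : ∀ x ∈ Ici a,
      HasDerivAt (fun y => -(s y ^ (-ρ) / ρ)) (E x * s x ^ (-(1 + ρ))) x := by
    intro x hx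
    refine (((hs x).rpow_const (p := -ρ) (Or.inl (ha x hx).ne')).div_const ρ).neg.congr_deriv ?_
    rw [show -ρ - 1 = -(1 + ρ) by ring]
    field_simp
  have hlim : Tendsto (fun y => -(s y ^ (-ρ) / ρ)) atTop (nhds 0) := by
    simpa using (((tendsto_rpow_neg_atTop hρ).comp hs_top).div_const ρ).neg
  exact ⟨Ioi a, Ioi_mem_atTop a, integrableOn_Ioi_deriv_of_nonneg' hderiv
    (fun x hx => mul_nonneg (hE x) (Real.rpow_nonneg (ha x (le_of_lt hx)).le _)) hlim⟩

lemma IntegrableAtFilter.atBot_of_comp_neg {f : ℝ → ℝ}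
    (hf : IntegrableAtFilter (fun x => f (-x)) atTop) : IntegrableAtFilter f atBot := by
  obtain ⟨a, ha⟩ := integrableAtFilter_atTop_iff.1 hf
  refine integrableAtFilter_atBot_iff.2 ⟨-a, ?_⟩
  rw [← (Measure.measurePreserving_neg volume).integrableOn_comp_preimage
    (Homeomorph.neg ℝ).measurableEmbedding]
  simpa [Function.comp_def] using ha

section Tails

variable {s E φ l : ℝ → ℝ} {p L : ℝ}

lemma integrableAtFilter_atTop_of_tendsto_rpow_mul (hp : 1 < p)
    (hs : ∀ x, HasDerivAt s (E x) x) (hE : ∀ x, 0 < E x) (hs_top : Tendsto s atTop atTop)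
    (hlsv : SlowlyVarying l) (hlcont : ContinuousOn l (Ici 0)) (hlpos : ∀ x ∈ Ici (0 : ℝ), 0 < l x)
    (hφ : Measurable φ) (hlim : Tendsto (fun x => |s x| ^ p * l |s x| * φ x / E x) atTop (nhds L)) :
    IntegrableAtFilter φ atTop := by
  set ρ := (p - 1) / 2
  have hρ : 0 < ρ := by simp only [ρ]; linarith
  obtain ⟨c, hc, hcl⟩ := hlsv.exists_pos_le_rpow_mul hlcont hlpos hρ
  have hcl_s : ∀ᶠ x in atTop, 0 < s x ∧ c ≤ s x ^ ρ * l (s x) :=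
    (hs_top.eventually_gt_atTop 0).and (hs_top.eventually hcl)
  have hbound : (fun x => (s x ^ ρ * l (s x))⁻¹) =O[atTop] fun _ => (1 : ℝ) := by
    refine Asymptotics.IsBigO.of_bound c⁻¹ (hcl_s.mono fun x ⟨_, hx⟩ => ?_)
    rw [norm_inv, Real.norm_of_nonneg (hc.le.trans hx), norm_one, mul_one]
    exact inv_anti₀ hc hx
  have hfactor : (fun x => (|s x| ^ p * l |s x| * φ x / E x) * (s x ^ ρ * l (s x))⁻¹ *
      (E x * s x ^ (-(1 + ρ)))) =ᶠ[atTop] φ := by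
    filter_upwards [hcl_s] with x ⟨hsx, hcx⟩
    have hsplit : s x ^ p = s x ^ (1 + ρ) * s x ^ ρ := by
      rw [← Real.rpow_add hsx]; congr 1; simp only [ρ]; ring
    have := (hE x).ne'
    have := (hlpos (s x) hsx.le).ne'
    have := (Real.rpow_pos_of_pos hsx ρ).ne'
    have := (Real.rpow_pos_of_pos hsx (1 + ρ)).ne'
    rw [abs_of_pos hsx, hsplit, Real.rpow_neg hsx.le]
    field_simp
  refine Asymptotics.IsBigO.integrableAtFilter ?_ hφ.stronglyMeasurable.stronglyMeasurableAtFilter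
    (integrableAtFilter_deriv_mul_rpow_neg hρ hs (fun x => (hE x).le) hs_top)
  simpa only [one_mul] using (((hlim.isBigO_one ℝ).mul hbound).mul
    (Asymptotics.isBigO_refl _ _)).congr' hfactor EventuallyEq.rfl

lemma integrableAtFilter_atBot_of_tendsto_rpow_mul (hp : 1 < p)
    (hs : ∀ x, HasDerivAt s (E x) x) (hE : ∀ x, 0 < E x) (hs_bot : Tendsto s atBot atBot)
    (hlsv : SlowlyVarying l) (hlcont : ContinuousOn l (Ici 0)) (hlpos : ∀ x ∈ Ici (0 : ℝ), 0 < l x)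
    (hφ : Measurable φ) (hlim : Tendsto (fun x => |s x| ^ p * l |s x| * φ x / E x) atBot (nhds L)) :
    IntegrableAtFilter φ atBot := by
  refine IntegrableAtFilter.atBot_of_comp_neg (integrableAtFilter_atTop_of_tendsto_rpow_mul
    (s := fun x => -s (-x)) (E := fun x => E (-x)) (L := L) hp (fun x => ?_) (fun x => hE (-x))
    (tendsto_neg_atBot_atTop.comp (hs_bot.comp tendsto_neg_atTop_atBot)) hlsv hlcont hlpos
    (hφ.comp measurable_neg) ?_)
  · exact ((hs (-x)).comp x (hasDerivAt_neg' x)).neg.congr_deriv (by ring)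
  · simpa only [abs_neg, Function.comp_def] using hlim.comp tendsto_neg_atTop_atBot

end Tails

lemma integrable_withDensity_ofReal {α : Type*} [MeasurableSpace α] {μ : Measure α} {f g : α → ℝ}
    (hg : Measurable g) (hfg : Integrable (fun x => f x * g x) μ) :
    Integrable f (μ.withDensity fun x => ENNReal.ofReal (g x)) := by
  rw [integrable_withDensity_iff hg.ennreal_ofReal (ae_of_all _ fun _ => ENNReal.ofReal_lt_top)]
  refine (hfg.indicator ((measurableSet_Ici (a := (0 : ℝ))).preimage hg)).congr (ae_of_all _ fun x => ?_)
  by_cases hx : 0 ≤ g x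
  · simp [hx]
  · simp [hx, ENNReal.ofReal_of_nonpos (not_le.1 hx).le]

lemma locallyIntegrable_of_measurable_of_locally_bounded {f : ℝ → ℝ} (hf : Measurable f)
    (hbdd : ∀ r : ℝ, 0 < r → ∃ C : ℝ, ∀ x, |x| ≤ r → |f x| ≤ C) : LocallyIntegrable f := by
  refine locallyIntegrable_iff.2 fun K hK => ?_
  obtain ⟨r, hr, hKr⟩ := hK.isBounded.subset_closedBall_lt 0 0
  obtain ⟨C, hC⟩ := hbdd r hr
  refine (Measure.integrableOn_of_bounded (M := C) (measure_closedBall_lt_top (x := 0)).ne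
    hf.aestronglyMeasurable (ae_restrict_of_forall_mem Metric.isClosed_closedBall.measurableSet
      fun x hx => ?_)).mono_set hKr
  simpa [Real.norm_eq_abs] using hC x (by simpa using hx)

theorem integrable_of_alpha_gt_one_general
    (b σ : ℝ → ℝ) (hb : Continuous b) (hσ : Continuous σ)
    (hσpos : ∀ x, 0 < σ x)
    (s : ℝ → ℝ)
    (hs : ∀ x, s x = ∫ v in (0 : ℝ)..x,
        Real.exp (-2 * ∫ u in (0 : ℝ)..v, b u / (σ u) ^ 2))
    (hstop : Tendsto s atTop atTop) (hsbot : Tendsto s atBot atBot)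
    (m : ℝ → ℝ) (hm : ∀ x, m x = ((σ x) ^ 2 * deriv s x)⁻¹)
    (κ : ℝ)
    (μ : Measure ℝ)
    (hμ : μ = (volume.withDensity fun x => ENNReal.ofReal (κ * m x)))
    (f : ℝ → ℝ) (hfmeas : Measurable f)
    (hfloc : ∀ r : ℝ, 0 < r → ∃ C : ℝ, ∀ x, |x| ≤ r → |f x| ≤ C)
    (α : ℝ) (hα : 1 < α)
    (fp fm : ℝ)
    (l : ℝ → ℝ) (hlcont : ContinuousOn l (Set.Ici 0))
    (hlpos : ∀ x ∈ Set.Ici (0 : ℝ), 0 < l x) (hlsv : SlowlyVarying l)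
    (hftop : Tendsto
      (fun x => ((σ x * deriv s x) ^ 2)⁻¹ * |s x| ^ (2 - 1 / α) * l |s x| * f x)
      atTop (nhds fp))
    (hfbot : Tendsto
      (fun x => ((σ x * deriv s x) ^ 2)⁻¹ * |s x| ^ (2 - 1 / α) * l |s x| * f x)
      atBot (nhds fm)) :
    Integrable f μ := by
  set E : ℝ → ℝ := fun x => Real.exp (-2 * ∫ u in (0 : ℝ)..x, b u / σ u ^ 2)
  have hE_cont : Continuous E := Real.continuous_exp.comp <| continuous_const.mul <|
    continuous_primitive (fun _ _ => (hb.div (hσ.pow 2) fun v =>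
      (pow_pos (hσpos v) 2).ne').intervalIntegrable _ _) 0
  have hE_pos : ∀ x, 0 < E x := fun x => Real.exp_pos _
  have hsE : ∀ x, HasDerivAt s (E x) x := fun x => by
    rw [show s = fun x => ∫ v in (0 : ℝ)..x, E v from funext hs]
    exact (hE_cont.integral_hasStrictDerivAt 0 x).hasDerivAt
  have hm_E : ∀ x, m x = (σ x ^ 2 * E x)⁻¹ := fun x => by rw [hm, (hsE x).deriv]
  have hm_cont : Continuous m := by
    rw [funext hm_E]
    exact ((hσ.pow 2).mul hE_cont).inv₀ fun x => (mul_pos (pow_pos (hσpos x) 2) (hE_pos x)).ne'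
  have hnorm : ∀ x, ((σ x * deriv s x) ^ 2)⁻¹ * |s x| ^ (2 - 1 / α) * l |s x| * f x =
      |s x| ^ (2 - 1 / α) * l |s x| * (f x * m x) / E x := fun x => by
    rw [(hsE x).deriv, hm_E]
    field_simp [(hσpos x).ne', (hE_pos x).ne']
  simp only [hnorm] at hftop hfbot
  have hp : 1 < 2 - 1 / α := by linarith [(div_lt_one (by linarith)).2 hα]
  have hfm_meas : Measurable fun x => f x * m x := hfmeas.mul hm_cont.measurable
  have hfm : Integrable fun x => f x * m x := integrable_iff_integrableAtFilter_atBot_atTop.2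
    ⟨⟨integrableAtFilter_atBot_of_tendsto_rpow_mul hp hsE hE_pos hsbot hlsv hlcont hlpos
        hfm_meas hfbot,
      integrableAtFilter_atTop_of_tendsto_rpow_mul hp hsE hE_pos hstop hlsv hlcont hlpos
        hfm_meas hftop⟩,
    (locallyIntegrable_of_measurable_of_locally_bounded hfmeas hfloc).mul_continuous hm_cont⟩
  rw [hμ]
  exact integrable_withDensity_ofReal (measurable_const.mul hm_cont.measurable)
    (by simpa only [mul_left_comm] using hfm.const_mul κ)

/-- If `f` satisfies the stable asymptotic condition with index `α > 1`, then
`f ∈ L¹(μ)`, where `μ(dx) = κ m(x) dx` is the invariant probability measure. -/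
theorem integrable_of_alpha_gt_one
    (b σ : ℝ → ℝ) (hb : Continuous b) (hσ : Continuous σ)
    (hσpos : ∀ x, 0 < σ x)
    (s : ℝ → ℝ)
    (hs : ∀ x, s x = ∫ v in (0 : ℝ)..x,
        Real.exp (-2 * ∫ u in (0 : ℝ)..v, b u / (σ u) ^ 2))
    (hstop : Tendsto s atTop atTop) (hsbot : Tendsto s atBot atBot)
    (m : ℝ → ℝ) (hm : ∀ x, m x = ((σ x) ^ 2 * deriv s x)⁻¹)
    (hmint : Integrable m)
    (κ : ℝ) (hκ : κ = (∫ x, m x)⁻¹)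
    (μ : Measure ℝ)
    (hμ : μ = (volume.withDensity fun x => ENNReal.ofReal (κ * m x)))
    (f : ℝ → ℝ) (hfmeas : Measurable f)
    (hfloc : ∀ r : ℝ, 0 < r → ∃ C : ℝ, ∀ x, |x| ≤ r → |f x| ≤ C)
    (α : ℝ) (hα : 1 < α)
    (fp fm : ℝ) (hne : 0 < |fp| + |fm|)
    (l : ℝ → ℝ) (hlcont : ContinuousOn l (Set.Ici 0))
    (hlpos : ∀ x ∈ Set.Ici (0 : ℝ), 0 < l x) (hlsv : SlowlyVarying l)
    (hftop : Tendsto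
      (fun x => ((σ x * deriv s x) ^ 2)⁻¹ * |s x| ^ (2 - 1 / α) * l |s x| * f x)
      atTop (nhds fp))
    (hfbot : Tendsto
      (fun x => ((σ x * deriv s x) ^ 2)⁻¹ * |s x| ^ (2 - 1 / α) * l |s x| * f x)
      atBot (nhds fm)) :
    Integrable f μ :=
  integrable_of_alpha_gt_one_general b σ hb hσ hσpos s hs hstop hsbot m hm κ μ hμ f hfmeas hfloc α
    hα fp fm l hlcont hlpos hlsv hftop hfbot
end

section
/- In the setting of the previous definitions (scale function 𝔰, speed density m, invariant probability μ), let f satisfy the asymptotic condition [σ(x)𝔰'(x)]^{-2}|𝔰(x)|^{2−1/α}ℓ(|𝔰(x)|)f(x) → f₊/f₋ as x → ±∞ with α = 1 and ∫₁^∞ dx/(x·ℓ(x)) = ∞. Then f is NOT integrable with respect to μ, provided |f₊|+|f₋| > 0. -/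
open Filter MeasureTheory Set intervalIntegral

/-!
Write `𝔰` for the scale function. Since `m = (σ² 𝔰')⁻¹`, the asymptotic condition with `α = 1`
says that `|𝔰| ℓ(|𝔰|) / 𝔰' · f m` tends to `f₊` (resp. `f₋`) at `+∞` (resp. `-∞`); at an end
where this limit is nonzero, `|f m| ≳ 𝔰' / (|𝔰| ℓ(|𝔰|))` on a tail, and the substitution
`v = 𝔰(x)` turns the integral of the right-hand side over that tail into a tail of the
divergent integral `∫ dv / (v ℓ(v))`.
-/

open Real Topology

theorem integrableOn_Ioi_deriv_mul_comp_iff {t t' : ℝ → ℝ} (g : ℝ → ℝ) (a : ℝ)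
    (ht : ∀ x, HasDerivAt t (t' x) x) (ht'pos : ∀ x, 0 < t' x)
    (htop : Tendsto t atTop atTop) :
    IntegrableOn (fun x => t' x * g (t x)) (Ioi a) ↔ IntegrableOn g (Ioi (t a)) := by
  have hmono : StrictMono t := strictMono_of_deriv_pos fun x => (ht x).deriv ▸ ht'pos x
  have hcont : Continuous t := continuous_iff_continuousAt.2 fun x => (ht x).continuousAt
  rw [← hcont.continuousOn.image_Ioi_of_strictMonoOn (hmono.strictMonoOn _) htop,
    integrableOn_image_iff_integrableOn_abs_deriv_smul measurableSet_Ioi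
      (fun x _ => (ht x).hasDerivWithinAt) hmono.injective.injOn]
  simp only [abs_of_pos (ht'pos _), smul_eq_mul]

theorem integrable_withDensity_ofReal_iff {α : Type*} [MeasurableSpace α] {μ : Measure α}
    {ρ f : α → ℝ} (hρ : Measurable ρ) (hρ0 : ∀ x, 0 ≤ ρ x) :
    Integrable f (μ.withDensity fun x => ENNReal.ofReal (ρ x)) ↔
      Integrable (fun x => f x * ρ x) μ := by
  rw [integrable_withDensity_iff hρ.ennreal_ofReal (ae_of_all _ fun _ => ENNReal.ofReal_lt_top)]
  simp only [ENNReal.toReal_ofReal (hρ0 _)]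

theorem hasDerivAt_scale {b σ s : ℝ → ℝ} (hb : Continuous b) (hσ : Continuous σ)
    (hσ0 : ∀ x, σ x ≠ 0)
    (hs : ∀ x, s x = ∫ v in (0 : ℝ)..x, exp (-2 * ∫ u in (0 : ℝ)..v, b u / σ u ^ 2)) (x : ℝ) :
    HasDerivAt s (exp (-2 * ∫ u in (0 : ℝ)..x, b u / σ u ^ 2)) x := by
  have hdrift : Continuous fun x => b x / σ x ^ 2 :=
    hb.div (hσ.pow 2) fun x => pow_ne_zero 2 (hσ0 x)
  have hs' : Continuous fun v => exp (-2 * ∫ u in (0 : ℝ)..v, b u / σ u ^ 2) :=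
    continuous_exp.comp <| continuous_const.mul <|
      continuous_primitive (fun _ _ => hdrift.intervalIntegrable _ _) 0
  rw [funext hs]
  exact (hs'.integral_hasStrictDerivAt 0 x).hasDerivAt

theorem continuousOn_inv_id_mul {l : ℝ → ℝ} (hlcont : ContinuousOn l (Ici 0))
    (hlpos : ∀ x ∈ Ici (0 : ℝ), 0 < l x) : ContinuousOn (fun v => (v * l v)⁻¹) (Ioi 0) :=
  (continuousOn_id.mul (hlcont.mono Ioi_subset_Ici_self)).inv₀ fun v hv =>
    (mul_pos hv (hlpos v (mem_Ici.2 hv.le))).ne'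

theorem not_integrableOn_Ioi_deriv_div_comp {l t t' : ℝ → ℝ}
    (hlcont : ContinuousOn l (Ici 0)) (hlpos : ∀ x ∈ Ici (0 : ℝ), 0 < l x)
    (hldiv : ¬ IntegrableOn (fun v => (v * l v)⁻¹) (Ioi 1))
    (ht : ∀ x, HasDerivAt t (t' x) x) (ht'pos : ∀ x, 0 < t' x)
    (htop : Tendsto t atTop atTop) {a : ℝ} (hta : 1 ≤ t a) :
    ¬ IntegrableOn (fun x => t' x * (t x * l (t x))⁻¹) (Ioi a) := by
  rw [integrableOn_Ioi_deriv_mul_comp_iff (fun v => (v * l v)⁻¹) a ht ht'pos htop]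
  intro hint
  have hcont : ContinuousOn (fun v => (v * l v)⁻¹) (Icc 1 (t a)) :=
    (continuousOn_inv_id_mul hlcont hlpos).mono fun v hv => zero_lt_one.trans_le hv.1
  apply hldiv
  rw [← Ioc_union_Ioi_eq_Ioi hta]
  exact (hcont.integrableOn_Icc.mono_set Ioc_subset_Icc_self).union hint

theorem not_integrable_of_tendsto_atTop {l t t' F : ℝ → ℝ}
    (hlcont : ContinuousOn l (Ici 0)) (hlpos : ∀ x ∈ Ici (0 : ℝ), 0 < l x)
    (hldiv : ¬ IntegrableOn (fun v => (v * l v)⁻¹) (Ioi 1))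
    (ht : ∀ x, HasDerivAt t (t' x) x) (ht'pos : ∀ x, 0 < t' x)
    (htop : Tendsto t atTop atTop) {c : ℝ} (hc : c ≠ 0)
    (hF : Tendsto (fun x => |t x| * l |t x| / t' x * F x) atTop (𝓝 c)) :
    ¬ Integrable F := by
  intro hFint
  obtain ⟨a, ha⟩ := eventually_atTop.1 <| (htop.eventually_ge_atTop 1).and <|
    hF.abs.eventually (eventually_gt_nhds (half_lt_self (abs_pos.2 hc)))
  have hbound : ∀ x, a ≤ x → ‖t' x * (t x * l (t x))⁻¹‖ ≤ 2 / |c| * ‖F x‖ := by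
    intro x hx
    obtain ⟨ht1, hFx⟩ := ha x hx
    have htpos : 0 < t x := zero_lt_one.trans_le ht1
    have hratio : 0 < t x * l (t x) / t' x :=
      div_pos (mul_pos htpos (hlpos _ (zero_le_one.trans ht1))) (ht'pos x)
    rw [abs_of_pos htpos, abs_mul, abs_of_pos hratio] at hFx
    rw [← div_eq_mul_inv, ← inv_div, norm_inv, Real.norm_of_nonneg hratio.le, Real.norm_eq_abs,
      inv_le_iff_one_le_mul₀ hratio]
    have hc' : 0 < |c| := abs_pos.2 hc
    calc (1 : ℝ) = 2 / |c| * (|c| / 2) := by field_simp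
      _ ≤ 2 / |c| * (t x * l (t x) / t' x * |F x|) := by gcongr
      _ = 2 / |c| * |F x| * (t x * l (t x) / t' x) := by ring
  have hmeas : AEStronglyMeasurable (fun x => t' x * (t x * l (t x))⁻¹)
      (volume.restrict (Ioi a)) := by
    have htcont : Continuous t := continuous_iff_continuousAt.2 fun x => (ht x).continuousAt
    have hcomp : ContinuousOn (fun x => (t x * l (t x))⁻¹) (Ioi a) :=
      (continuousOn_inv_id_mul hlcont hlpos).comp htcont.continuousOn fun x hx =>
        zero_lt_one.trans_le (ha x hx.le).1
    rw [show t' = deriv t from funext fun x => (ht x).deriv.symm]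
    exact (measurable_deriv t).aestronglyMeasurable.mul
      (hcomp.aestronglyMeasurable measurableSet_Ioi)
  exact not_integrableOn_Ioi_deriv_div_comp hlcont hlpos hldiv ht ht'pos htop (ha a le_rfl).1 <|
    (hFint.norm.const_mul (2 / |c|)).integrableOn.mono' hmeas <|
      (ae_restrict_iff' measurableSet_Ioi).2 <| ae_of_all _ fun x hx => hbound x hx.le

theorem not_integrable_of_tendsto_atBot {l t t' F : ℝ → ℝ}
    (hlcont : ContinuousOn l (Ici 0)) (hlpos : ∀ x ∈ Ici (0 : ℝ), 0 < l x)
    (hldiv : ¬ IntegrableOn (fun v => (v * l v)⁻¹) (Ioi 1))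
    (ht : ∀ x, HasDerivAt t (t' x) x) (ht'pos : ∀ x, 0 < t' x)
    (hbot : Tendsto t atBot atBot) {c : ℝ} (hc : c ≠ 0)
    (hF : Tendsto (fun x => |t x| * l |t x| / t' x * F x) atBot (𝓝 c)) :
    ¬ Integrable F := fun hFint =>
  not_integrable_of_tendsto_atTop (t := fun y => -t (-y)) (t' := fun y => t' (-y))
    (F := fun y => F (-y)) hlcont hlpos hldiv
    (fun y => by simpa using ((ht (-y)).comp y (hasDerivAt_neg y)).fun_neg)
    (fun y => ht'pos (-y)) (tendsto_neg_atBot_atTop.comp (hbot.comp tendsto_neg_atTop_atBot)) hc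
    (by simpa only [Function.comp_def, abs_neg] using hF.comp tendsto_neg_atTop_atBot)
    hFint.comp_neg

theorem not_integrable_of_alpha_eq_one_general
    (b σ : ℝ → ℝ) (hb : Continuous b) (hσ : Continuous σ)
    (hσpos : ∀ x, 0 < σ x)
    (s : ℝ → ℝ)
    (hs : ∀ x, s x = ∫ v in (0 : ℝ)..x,
        Real.exp (-2 * ∫ u in (0 : ℝ)..v, b u / (σ u) ^ 2))
    (hstop : Tendsto s atTop atTop) (hsbot : Tendsto s atBot atBot)
    (m : ℝ → ℝ) (hm : ∀ x, m x = ((σ x) ^ 2 * deriv s x)⁻¹)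
    (hmint : Integrable m)
    (κ : ℝ) (hκ : κ = (∫ x, m x)⁻¹)
    (μ : Measure ℝ)
    (hμ : μ = (volume.withDensity fun x => ENNReal.ofReal (κ * m x)))
    (f : ℝ → ℝ)
    (α : ℝ) (hα : α = 1)
    (fp fm : ℝ) (hne : 0 < |fp| + |fm|)
    (l : ℝ → ℝ) (hlcont : ContinuousOn l (Set.Ici 0))
    (hlpos : ∀ x ∈ Set.Ici (0 : ℝ), 0 < l x)
    (hldiv : ¬ IntegrableOn (fun v => (v * l v)⁻¹) (Set.Ioi (1 : ℝ)))
    (hftop : Tendsto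
      (fun x => ((σ x * deriv s x) ^ 2)⁻¹ * |s x| ^ (2 - 1 / α) * l |s x| * f x)
      atTop (nhds fp))
    (hfbot : Tendsto
      (fun x => ((σ x * deriv s x) ^ 2)⁻¹ * |s x| ^ (2 - 1 / α) * l |s x| * f x)
      atBot (nhds fm)) :
    ¬ Integrable f μ := by
  have hs' := hasDerivAt_scale hb hσ (fun x => (hσpos x).ne') hs
  have hds : ∀ x, HasDerivAt s (deriv s x) x := fun x => (hs' x).differentiableAt.hasDerivAt
  have hds_pos : ∀ x, 0 < deriv s x := fun x => (hs' x).deriv ▸ exp_pos _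
  have hm_pos : ∀ x, 0 < m x := fun x => by
    rw [hm]; exact inv_pos.2 (mul_pos (pow_pos (hσpos x) 2) (hds_pos x))
  have hκ_pos : 0 < κ := by
    rw [hκ, inv_pos, integral_pos_iff_support_of_nonneg (fun x => (hm_pos x).le) hmint,
      Function.support_eq_univ fun x => (hm_pos x).ne']
    simp
  have hm_meas : Measurable m := by
    rw [funext hm]; exact ((hσ.measurable.pow_const 2).mul (measurable_deriv s)).inv
  rw [hμ, integrable_withDensity_ofReal_iff (hm_meas.const_mul κ)
    fun x => (mul_pos hκ_pos (hm_pos x)).le]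
  have hweight : ∀ x, |s x| * l |s x| / deriv s x * (f x * (κ * m x)) =
      κ * (((σ x * deriv s x) ^ 2)⁻¹ * |s x| ^ (2 - 1 / α) * l |s x| * f x) := fun x => by
    have := (hds_pos x).ne'
    rw [hm, hα, show (2 : ℝ) - 1 / 1 = 1 by norm_num, rpow_one]
    field_simp
  obtain hfp | hfm : fp ≠ 0 ∨ fm ≠ 0 := by
    by_contra! h
    simp [h.1, h.2] at hne
  · exact not_integrable_of_tendsto_atTop hlcont hlpos hldiv hds hds_pos hstop
      (mul_ne_zero hκ_pos.ne' hfp) (by simpa only [hweight] using hftop.const_mul κ)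
  · exact not_integrable_of_tendsto_atBot hlcont hlpos hldiv hds hds_pos hsbot
      (mul_ne_zero hκ_pos.ne' hfm) (by simpa only [hweight] using hfbot.const_mul κ)

/-- If `f` satisfies the stable asymptotic condition with index `α > 1`, then
`f ∉ L¹(μ)` when `α = 1` and `∫₁^∞ dx/(x l(x)) = ∞`. -/
theorem not_integrable_of_alpha_eq_one
    (b σ : ℝ → ℝ) (hb : Continuous b) (hσ : Continuous σ)
    (hσpos : ∀ x, 0 < σ x)
    (s : ℝ → ℝ)
    (hs : ∀ x, s x = ∫ v in (0 : ℝ)..x,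
        Real.exp (-2 * ∫ u in (0 : ℝ)..v, b u / (σ u) ^ 2))
    (hstop : Tendsto s atTop atTop) (hsbot : Tendsto s atBot atBot)
    (m : ℝ → ℝ) (hm : ∀ x, m x = ((σ x) ^ 2 * deriv s x)⁻¹)
    (hmint : Integrable m)
    (κ : ℝ) (hκ : κ = (∫ x, m x)⁻¹)
    (μ : Measure ℝ)
    (hμ : μ = (volume.withDensity fun x => ENNReal.ofReal (κ * m x)))
    (f : ℝ → ℝ) (hfmeas : Measurable f)
    (hfloc : ∀ r : ℝ, 0 < r → ∃ C : ℝ, ∀ x, |x| ≤ r → |f x| ≤ C)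
    (α : ℝ) (hα : α = 1)
    (fp fm : ℝ) (hne : 0 < |fp| + |fm|)
    (l : ℝ → ℝ) (hlcont : ContinuousOn l (Set.Ici 0))
    (hlpos : ∀ x ∈ Set.Ici (0 : ℝ), 0 < l x) (hlsv : SlowlyVarying l)
    (hldiv : ¬ IntegrableOn (fun v => (v * l v)⁻¹) (Set.Ioi (1 : ℝ)))
    (hftop : Tendsto
      (fun x => ((σ x * deriv s x) ^ 2)⁻¹ * |s x| ^ (2 - 1 / α) * l |s x| * f x)
      atTop (nhds fp))
    (hfbot : Tendsto
      (fun x => ((σ x * deriv s x) ^ 2)⁻¹ * |s x| ^ (2 - 1 / α) * l |s x| * f x)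
      atBot (nhds fm)) :
    ¬ Integrable f μ :=
  not_integrable_of_alpha_eq_one_general b σ hb hσ hσpos s hs hstop hsbot m hm hmint κ hκ μ hμ f α
    hα fp fm hne l hlcont hlpos hldiv hftop hfbot
end

section
/- Let α ∈ (0,1), (W_t) a Brownian motion, τ_t the inverse of its local time at 0, and for a, b ∈ ℝ set S_t = ∫₀^{τ_t} sgn_{a,b}(W_s)|W_s|^{1/α−2} ds where sgn_{a,b}(x) = a·1_{x>0} + b·1_{x<0}. Then (S_t) is strictly α-stable: for all c > 0, (S_t)_{t≥0} has the same law as (c^{−1/α} S_{ct})_{t≥0}. -/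
open Filter MeasureTheory Set ProbabilityTheory

/-- A (standard) Brownian motion: starts at 0, a.s. continuous paths, Gaussian
increments and independent increments. -/
def IsBrownianMotion {Ω : Type*} [MeasurableSpace Ω] (μ : Measure Ω)
    (W : ℝ → Ω → ℝ) : Prop :=
  (∀ t, Measurable (W t)) ∧
  (∀ ω, W 0 ω = 0) ∧
  (∀ᵐ ω ∂μ, Continuous fun t => W t ω) ∧
  (∀ s t : ℝ, 0 ≤ s → s ≤ t →
    μ.map (fun ω => W t ω - W s ω) = gaussianReal 0 (Real.toNNReal (t - s))) ∧
  (∀ n : ℕ, ∀ t : Fin (n + 1) → ℝ, Monotone t → 0 ≤ t 0 →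
    iIndepFun
      (fun i : Fin n => fun ω => W (t i.succ) ω - W (t i.castSucc) ω) μ)

/-- `L x t ω` is the (jointly continuous) local time family of the process `W`,
characterized by continuity, monotonicity in time and the occupation times formula. -/
def IsLocalTimeFamily {Ω : Type*} [MeasurableSpace Ω] (μ : Measure Ω)
    (W : ℝ → Ω → ℝ) (L : ℝ → ℝ → Ω → ℝ) : Prop :=
  (∀ x t, Measurable (L x t)) ∧
  (∀ᵐ ω ∂μ,
    Continuous (fun p : ℝ × ℝ => L p.1 p.2 ω) ∧
    (∀ x, Monotone fun t => L x t ω) ∧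
    (∀ x, L x 0 ω = 0) ∧
    (∀ t : ℝ, 0 ≤ t → ∀ φ : ℝ → ℝ, Measurable φ → (∀ y, 0 ≤ φ y) →
      ∫ s in (0:ℝ)..t, φ (W s ω) = ∫ x, φ x * L x t ω))

/-- The right-continuous generalized inverse of the local time at `0`. -/
noncomputable def invLocalTime {Ω : Type*} (L : ℝ → ℝ → Ω → ℝ)
    (t : ℝ) (ω : Ω) : ℝ :=
  sInf {u : ℝ | 0 ≤ u ∧ t < L 0 u ω}


/-- `sgn_{a,b}(x) = a·1_{x>0} + b·1_{x<0}`. -/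
noncomputable def sgnab (a b x : ℝ) : ℝ :=
  if 0 < x then a else if x < 0 then b else 0

/-!
Brownian scaling `W ↦ c⁻¹ W (c² ·)` maps a Brownian motion to a Brownian motion and its
local time `L` to `c⁻¹ L (c ·, c² ·)`; hence the inverse local time `τ_t` becomes `c⁻² τ_{ct}`,
and since `x ↦ sgn_{a,b}(x) |x|^{1/α - 2}` is homogeneous of degree `1/α - 2`, the functional
`S_t` becomes `c^{-1/α} S_{ct}`.

To compare laws, both processes are written almost surely as one measurable functional of the
path sampled at the nonnegative rationals: continuity recovers the path, the occupation times
formula recovers the local time at `0` as a limit of normalized occupation times, and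
monotonicity recovers its inverse from rational times. The two sampled paths have the same law
because finite-dimensional distributions of a Brownian motion are images of independent Gaussian
increments under partial sums.
-/

open scoped Topology Pointwise

lemma Fin.partialSum_sub_of_eq_zero {n : ℕ} {G : Type*} [AddCommGroup G]
    {f : Fin (n + 1) → G} (hf : f 0 = 0) :
    Fin.partialSum (fun i => f i.succ - f i.castSucc) = f := by
  simpa only [hf, zero_vadd, neg_add_eq_sub] using Fin.partialSum_left_neg f

lemma measurable_partialSum {n : ℕ} :
    Measurable (Fin.partialSum : (Fin n → ℝ) → Fin (n + 1) → ℝ) := by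
  refine measurable_pi_lambda _ fun i => ?_
  induction i using Fin.induction with
  | zero => simp only [Fin.partialSum_zero]; exact measurable_const
  | succ i ih => simp only [Fin.partialSum_succ]; exact ih.add (measurable_pi_apply i)

lemma comp_eq_partialSum_increments {Ω : Type*} (X : ℝ → Ω → ℝ) (hX : ∀ ω, X 0 ω = 0)
    {n : ℕ} {t : Fin (n + 1) → ℝ} (ht0 : t 0 = 0) :
    (fun ω k => X (t k) ω)
      = Fin.partialSum ∘ fun ω i => X (t i.succ) ω - X (t i.castSucc) ω := by
  ext1 ω
  exact (Fin.partialSum_sub_of_eq_zero (f := fun k => X (t k) ω) (by simp [ht0, hX])).symm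

section BrownianMotion

variable {Ω Ω' : Type*} [MeasurableSpace Ω] [MeasurableSpace Ω'] {μ : Measure Ω}
  {ν : Measure Ω'} {W : ℝ → Ω → ℝ} {W' : ℝ → Ω' → ℝ}

lemma IsBrownianMotion.scale (hW : IsBrownianMotion μ W) {c : ℝ} (hc : 0 < c) :
    IsBrownianMotion μ (fun t ω => c⁻¹ * W (c ^ 2 * t) ω) := by
  obtain ⟨hmeas, hzero, hcont, hgauss, hindep⟩ := hW
  refine ⟨fun t => (hmeas _).const_mul _, fun ω => by simp [hzero], ?_, fun s t hs hst => ?_,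
    fun n t ht ht0 => ?_⟩
  · filter_upwards [hcont] with ω hω
    exact continuous_const.mul (hω.comp (continuous_const.mul continuous_id))
  · have hincr : (fun ω => c⁻¹ * W (c ^ 2 * t) ω - c⁻¹ * W (c ^ 2 * s) ω)
        = (c⁻¹ * ·) ∘ fun ω => W (c ^ 2 * t) ω - W (c ^ 2 * s) ω := by
      ext; simp [mul_sub]
    rw [hincr, ← Measure.map_map (measurable_const_mul _)
      (f := fun ω => W (c ^ 2 * t) ω - W (c ^ 2 * s) ω) ((hmeas _).sub (hmeas _)),
      hgauss _ _ (by positivity) (by gcongr), gaussianReal_map_const_mul, mul_zero]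
    congr 1
    ext
    rw [NNReal.coe_mul, NNReal.coe_mk, ← mul_sub, Real.coe_toNNReal _ (sub_nonneg.2 hst),
      Real.coe_toNNReal _ (mul_nonneg (sq_nonneg c) (sub_nonneg.2 hst))]
    field_simp
  · convert (hindep n (fun i => c ^ 2 * t i)
      (fun i j hij => mul_le_mul_of_nonneg_left (ht hij) (by positivity)) (by positivity)).comp
      (fun _ x => c⁻¹ * x) (fun _ => measurable_const_mul _) using 1
    ext i ω
    simp [mul_sub]

lemma IsBrownianMotion.measurable_increments (hW : IsBrownianMotion μ W) {n : ℕ}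
    (t : Fin (n + 1) → ℝ) :
    Measurable fun ω (i : Fin n) => W (t i.succ) ω - W (t i.castSucc) ω :=
  measurable_pi_lambda _ fun _ => (hW.1 _).sub (hW.1 _)

lemma IsBrownianMotion.map_increments (hW : IsBrownianMotion μ W) {n : ℕ}
    {t : Fin (n + 1) → ℝ} (ht : Monotone t) (ht0 : 0 ≤ t 0) :
    μ.map (fun ω (i : Fin n) => W (t i.succ) ω - W (t i.castSucc) ω)
      = Measure.pi fun i => gaussianReal 0 (t i.succ - t i.castSucc).toNNReal := by
  rw [(hW.2.2.2.2 n t ht ht0).map_fun_eq_pi_map fun _ => by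
    exact ((hW.1 _).sub (hW.1 _)).aemeasurable]
  congr with i : 1
  exact hW.2.2.2.1 _ _ (ht0.trans (ht (Fin.zero_le _))) (ht (Fin.castSucc_le_succ i))

lemma IsBrownianMotion.map_eval_eq_of_monotone (hW : IsBrownianMotion μ W)
    (hW' : IsBrownianMotion ν W') {n : ℕ} {t : Fin (n + 1) → ℝ} (ht : Monotone t)
    (ht0 : t 0 = 0) :
    μ.map (fun ω k => W (t k) ω) = ν.map (fun ω k => W' (t k) ω) := by
  rw [comp_eq_partialSum_increments W hW.2.1 ht0, comp_eq_partialSum_increments W' hW'.2.1 ht0,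
    ← Measure.map_map measurable_partialSum (hW.measurable_increments t),
    ← Measure.map_map measurable_partialSum (hW'.measurable_increments t),
    hW.map_increments ht ht0.ge, hW'.map_increments ht ht0.ge]

lemma IsBrownianMotion.map_eval_finset_eq (hW : IsBrownianMotion μ W)
    (hW' : IsBrownianMotion ν W') {ι : Type*} [LinearOrder ι] {τ : ι → ℝ} (hτ : Monotone τ)
    (hτ0 : ∀ i, 0 ≤ τ i) (J : Finset ι) :
    μ.map (fun ω (j : J) => W (τ j) ω) = ν.map (fun ω (j : J) => W' (τ j) ω) := by
  set e := J.orderIsoOfFin rfl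
  set t : Fin (J.card + 1) → ℝ := Fin.cons 0 fun k => τ (e k)
  have ht : Monotone t := by
    intro i j hij
    induction i using Fin.cases with
    | zero => induction j using Fin.cases <;> simp [t, hτ0]
    | succ i =>
      induction j using Fin.cases with
      | zero => exact absurd hij (by simp)
      | succ j => simpa [t] using hτ (e.monotone (Fin.succ_le_succ_iff.1 hij))
  have hrestrict : Measurable fun (x : Fin (J.card + 1) → ℝ) (j : J) => x (e.symm j).succ :=
    measurable_pi_lambda _ fun j => measurable_pi_apply _
  have hW_eq : (fun ω (j : J) => W (τ j) ω)
      = (fun x (j : J) => x (e.symm j).succ) ∘ fun ω k => W (t k) ω := by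
    ext; simp [t]
  have hW'_eq : (fun ω (j : J) => W' (τ j) ω)
      = (fun x (j : J) => x (e.symm j).succ) ∘ fun ω k => W' (t k) ω := by
    ext; simp [t]
  rw [hW_eq, hW'_eq, ← Measure.map_map hrestrict (measurable_pi_lambda _ fun _ => hW.1 _),
    ← Measure.map_map hrestrict (measurable_pi_lambda _ fun _ => hW'.1 _),
    hW.map_eval_eq_of_monotone hW' ht rfl]

lemma IsBrownianMotion.map_eval_eq [IsProbabilityMeasure μ] [IsProbabilityMeasure ν]
    (hW : IsBrownianMotion μ W) (hW' : IsBrownianMotion ν W') {ι : Type*} [LinearOrder ι]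
    {τ : ι → ℝ} (hτ : Monotone τ) (hτ0 : ∀ i, 0 ≤ τ i) :
    μ.map (fun ω i => W (τ i) ω) = ν.map (fun ω i => W' (τ i) ω) := by
  have hm : Measurable fun ω i => W (τ i) ω := measurable_pi_lambda _ fun _ => hW.1 _
  have hm' : Measurable fun ω i => W' (τ i) ω := measurable_pi_lambda _ fun _ => hW'.1 _
  have := Measure.isProbabilityMeasure_map (μ := μ) hm.aemeasurable
  refine ext_of_generate_finite _ generateFrom_measurableCylinders.symm
    isPiSystem_measurableCylinders (fun s hs => ?_) ?_
  · obtain ⟨J, B, hB, rfl⟩ := (mem_measurableCylinders s).1 hs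
    have h := congrArg (· B) (hW.map_eval_finset_eq hW' hτ hτ0 J)
    rw [Measure.map_apply (measurable_pi_lambda _ fun _ => hW.1 _) hB,
      Measure.map_apply (measurable_pi_lambda _ fun _ => hW'.1 _) hB] at h
    rwa [Measure.map_apply hm hB.cylinder, Measure.map_apply hm' hB.cylinder]
  · simp [Measure.map_apply hm .univ, Measure.map_apply hm' .univ]

end BrownianMotion

noncomputable def gridPoint (n : ℕ) (s : ℝ) : ℚ≥0 := (⌈s * (n + 1)⌉₊ : ℚ≥0) / (n + 1)

lemma tendsto_gridPoint {s : ℝ} (hs : 0 ≤ s) :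
    Tendsto (fun n => (gridPoint n s : ℝ)) atTop (𝓝 s) := by
  have h := (tendsto_nat_ceil_mul_div_atTop hs).comp
    (tendsto_natCast_atTop_atTop.atTop_add (tendsto_const_nhds (x := (1 : ℝ))))
  simpa [gridPoint, Function.comp_def] using h

/-- `liminf` is a measurable stand-in for the limit, which exists for continuous paths. -/
noncomputable def pathOfSamples (v : ℚ≥0 → ℝ) (s : ℝ) : ℝ :=
  liminf (fun n => v (gridPoint n s)) atTop

lemma measurable_pathOfSamples :
    Measurable fun p : (ℚ≥0 → ℝ) × ℝ => pathOfSamples p.1 p.2 := by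
  refine Measurable.liminf fun n => ?_
  have h : Measurable fun p : (ℚ≥0 → ℝ) × ℕ => p.1 ((p.2 : ℚ≥0) / (n + 1)) :=
    measurable_from_prod_countable_left fun k => measurable_pi_apply ((k : ℚ≥0) / (n + 1))
  exact h.comp (measurable_fst.prodMk (measurable_snd.mul_const _).nat_ceil)

lemma pathOfSamples_eq {w : ℝ → ℝ} (hw : Continuous w) {s : ℝ} (hs : 0 ≤ s) :
    pathOfSamples (fun q => w q) s = w s :=
  ((hw.tendsto s).comp (tendsto_gridPoint hs)).liminf_eq

lemma measurable_setIntegral_pathOfSamples {g : ℝ → ℝ} (hg : Measurable g)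
    {T : (ℚ≥0 → ℝ) → ℝ} (hT : Measurable T) :
    Measurable fun v => ∫ s in Ioc 0 (T v), g (pathOfSamples v s) := by
  have hset : MeasurableSet {p : (ℚ≥0 → ℝ) × ℝ | p.2 ∈ Ioc 0 (T p.1)} :=
    (measurableSet_lt measurable_const measurable_snd).inter
      (measurableSet_le measurable_snd (hT.comp measurable_fst))
  simp_rw [← integral_indicator measurableSet_Ioc]
  exact ((hg.comp measurable_pathOfSamples).indicator hset).stronglyMeasurable
    |>.integral_prod_right' |>.measurable

lemma setIntegral_pathOfSamples {w : ℝ → ℝ} (hw : Continuous w) (g : ℝ → ℝ) {T : ℝ}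
    (hT : 0 ≤ T) :
    ∫ s in Ioc 0 T, g (pathOfSamples (fun q => w q) s) = ∫ s in 0..T, g (w s) := by
  rw [intervalIntegral.integral_of_le hT]
  exact setIntegral_congr_fun measurableSet_Ioc fun s hs => by
    rw [pathOfSamples_eq hw hs.1.le]

structure IsOccupationDensity (w : ℝ → ℝ) (ℓ : ℝ → ℝ → ℝ) : Prop where
  continuous : Continuous w
  continuous_density : ∀ t, Continuous fun x => ℓ x t
  monotone_zero : Monotone (ℓ 0)
  integral_comp_eq : ∀ t, 0 ≤ t → ∀ φ : ℝ → ℝ, Measurable φ → (∀ y, 0 ≤ φ y) →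
    ∫ s in 0..t, φ (w s) = ∫ x, φ x * ℓ x t

lemma IsOccupationDensity.scale {w : ℝ → ℝ} {ℓ : ℝ → ℝ → ℝ} (h : IsOccupationDensity w ℓ)
    {c : ℝ} (hc : 0 < c) :
    IsOccupationDensity (fun s => c⁻¹ * w (c ^ 2 * s))
      (fun x t => c⁻¹ * ℓ (c * x) (c ^ 2 * t)) where
  continuous := continuous_const.mul (h.continuous.comp (continuous_const.mul continuous_id))
  continuous_density t :=
    continuous_const.mul ((h.continuous_density _).comp (continuous_const.mul continuous_id))
  monotone_zero u u' huu' := by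
    simp only [mul_zero]
    gcongr
    exact h.monotone_zero (by gcongr)
  integral_comp_eq t ht φ hφ hφ0 := by
    have hc2 : c ^ 2 ≠ 0 := by positivity
    calc ∫ s in 0..t, φ (c⁻¹ * w (c ^ 2 * s))
        = (c ^ 2)⁻¹ * ∫ s in 0..c ^ 2 * t, φ (c⁻¹ * w s) := by
          simpa using intervalIntegral.integral_comp_mul_left (fun s => φ (c⁻¹ * w s)) hc2
            (a := 0) (b := t)
      _ = (c ^ 2)⁻¹ * ∫ x, φ (c⁻¹ * x) * ℓ x (c ^ 2 * t) := by
          rw [h.integral_comp_eq _ (by positivity) (fun x => φ (c⁻¹ * x))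
            (hφ.comp (measurable_const_mul _)) fun _ => hφ0 _]
      _ = (c ^ 2)⁻¹ * (c * ∫ x, φ x * ℓ (c * x) (c ^ 2 * t)) := by
          have := Measure.integral_comp_mul_left (fun x => φ (c⁻¹ * x) * ℓ x (c ^ 2 * t)) c
          simp only [inv_mul_cancel_left₀ hc.ne', abs_inv, abs_of_pos hc, smul_eq_mul] at this
          rw [this]
          field_simp
      _ = ∫ x, φ x * (c⁻¹ * ℓ (c * x) (c ^ 2 * t)) := by
          simp_rw [mul_left_comm _ c⁻¹]
          rw [integral_const_mul]
          field_simp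

lemma tendsto_succ_mul_integral_inv_succ {f : ℝ → ℝ} (hf : Continuous f) :
    Tendsto (fun n : ℕ => (n + 1 : ℝ) * ∫ x in 0..(n + 1 : ℝ)⁻¹, f x) atTop (𝓝 (f 0)) := by
  have hn : Tendsto (fun n : ℕ => (n + 1 : ℝ)⁻¹) atTop (𝓝[>] 0) :=
    tendsto_inv_atTop_nhdsGT_zero.comp
      (tendsto_natCast_atTop_atTop.atTop_add (tendsto_const_nhds (x := (1 : ℝ))))
  simpa [Function.comp_def] using
    (hf.integral_hasStrictDerivAt 0 0).hasDerivAt.tendsto_slope_zero_right.comp hn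

noncomputable def localTimeOfSamples (v : ℚ≥0 → ℝ) (u : ℝ) : ℝ :=
  liminf (fun n : ℕ => (n + 1 : ℝ) *
    ∫ s in Ioc 0 u, (Ioc 0 (n + 1 : ℝ)⁻¹).indicator 1 (pathOfSamples v s)) atTop

lemma measurable_localTimeOfSamples (u : ℝ) : Measurable fun v => localTimeOfSamples v u :=
  Measurable.liminf fun _ => (measurable_setIntegral_pathOfSamples
    (measurable_const.indicator measurableSet_Ioc) measurable_const).const_mul _

lemma IsOccupationDensity.localTimeOfSamples_eq {w : ℝ → ℝ} {ℓ : ℝ → ℝ → ℝ}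
    (h : IsOccupationDensity w ℓ) {u : ℝ} (hu : 0 ≤ u) :
    localTimeOfSamples (fun q => w q) u = ℓ 0 u := by
  refine Tendsto.liminf_eq ?_
  convert tendsto_succ_mul_integral_inv_succ (h.continuous_density u) using 2 with n
  rw [setIntegral_pathOfSamples h.continuous _ hu, h.integral_comp_eq u hu
    ((Ioc 0 (n + 1 : ℝ)⁻¹).indicator 1) (measurable_one.indicator measurableSet_Ioc)
    (indicator_nonneg fun _ _ => zero_le_one),
    intervalIntegral.integral_of_le (by positivity), ← integral_indicator measurableSet_Ioc]
  congr 2 with x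
  by_cases hx : x ∈ Ioc 0 (n + 1 : ℝ)⁻¹ <;> simp [hx]

noncomputable def firstPassage (f : ℝ → ℝ) (t : ℝ) : ℝ := sInf {u | 0 ≤ u ∧ t < f u}

lemma invLocalTime_eq_firstPassage {Ω : Type*} (L : ℝ → ℝ → Ω → ℝ) (t : ℝ) (ω : Ω) :
    invLocalTime L t ω = firstPassage (L 0 · ω) t :=
  rfl

lemma firstPassage_nonneg (f : ℝ → ℝ) (t : ℝ) : 0 ≤ firstPassage f t :=
  Real.sInf_nonneg fun _ hu => hu.1

lemma firstPassage_scale (f : ℝ → ℝ) (t : ℝ) {a b : ℝ} (ha : 0 < a) (hb : 0 < b) :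
    firstPassage (fun u => a⁻¹ * f (b * u)) t = b⁻¹ * firstPassage f (a * t) := by
  have hset : {u | 0 ≤ u ∧ t < a⁻¹ * f (b * u)} = b⁻¹ • {r | 0 ≤ r ∧ a * t < f r} := by
    ext u
    simp [Set.mem_smul_set_iff_inv_smul_mem₀ (inv_ne_zero hb.ne'),
      mul_nonneg_iff_of_pos_left hb, lt_inv_mul_iff₀ ha]
  rw [firstPassage, hset, Real.sInf_smul_of_nonneg (inv_nonneg.2 hb.le), smul_eq_mul,
    firstPassage]

/-- The infimum is taken in `ℝ≥0∞` so that the junk value `sInf ∅ = 0` matches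
`⊤.toReal = 0`. -/
lemma Monotone.firstPassage_eq_iInf {f : ℝ → ℝ} (hf : Monotone f) (t : ℝ) :
    firstPassage f t = (⨅ q : ℚ≥0, if t < f q then ENNReal.ofReal q else ⊤).toReal := by
  rcases Set.eq_empty_or_nonempty {u | 0 ≤ u ∧ t < f u} with hA | hA
  · have hq : ∀ q : ℚ≥0, ¬ t < f q := fun q hq => hA.subset ⟨q.cast_nonneg, hq⟩
    simp [firstPassage, hA, hq]
  rw [firstPassage, ← ENNReal.toReal_ofReal (Real.sInf_nonneg fun _ hu => hu.1)]
  congr 1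
  refine le_antisymm (le_iInf fun q => ?_) (le_of_forall_gt fun c hc => ?_)
  · split_ifs with hq
    · exact ENNReal.ofReal_le_ofReal (csInf_le ⟨0, fun _ hu => hu.1⟩ ⟨q.cast_nonneg, hq⟩)
    · exact le_top
  obtain ⟨r, -, hAr, hrc⟩ := ENNReal.lt_iff_exists_real_btwn.1 hc
  obtain ⟨u, hu, hur⟩ := exists_lt_of_csInf_lt hA (ENNReal.ofReal_lt_ofReal_iff'.1 hAr).1
  obtain ⟨q, huq, hqr⟩ := exists_rat_btwn hur
  have hq0 : 0 ≤ q := by exact_mod_cast hu.1.trans huq.le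
  calc (⨅ q : ℚ≥0, if t < f q then ENNReal.ofReal q else ⊤)
      ≤ ENNReal.ofReal q :=
        (iInf_le _ ⟨q, hq0⟩).trans_eq (if_pos (hu.2.trans_le (hf huq.le)))
    _ < c := (ENNReal.ofReal_le_ofReal hqr.le).trans_lt hrc

noncomputable def invLocalTimeOfSamples (v : ℚ≥0 → ℝ) (t : ℝ) : ℝ :=
  (⨅ q : ℚ≥0, if t < localTimeOfSamples v q then ENNReal.ofReal q else ⊤).toReal

lemma measurable_invLocalTimeOfSamples (t : ℝ) :
    Measurable fun v => invLocalTimeOfSamples v t :=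
  (Measurable.iInf fun q : ℚ≥0 => Measurable.ite
    (measurableSet_lt measurable_const (measurable_localTimeOfSamples q))
    measurable_const measurable_const).ennreal_toReal

lemma IsOccupationDensity.invLocalTimeOfSamples_eq {w : ℝ → ℝ} {ℓ : ℝ → ℝ → ℝ}
    (h : IsOccupationDensity w ℓ) (t : ℝ) :
    invLocalTimeOfSamples (fun q => w q) t = firstPassage (ℓ 0) t := by
  simp only [h.monotone_zero.firstPassage_eq_iInf, invLocalTimeOfSamples,
    h.localTimeOfSamples_eq (NNRat.cast_nonneg _)]

noncomputable def additiveFunctionalOfSamples (g : ℝ → ℝ) (v : ℚ≥0 → ℝ) (t : ℝ) : ℝ :=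
  ∫ s in Ioc 0 (invLocalTimeOfSamples v t), g (pathOfSamples v s)

lemma measurable_additiveFunctionalOfSamples {g : ℝ → ℝ} (hg : Measurable g) :
    Measurable (additiveFunctionalOfSamples g) :=
  measurable_pi_lambda _ fun t =>
    measurable_setIntegral_pathOfSamples hg (measurable_invLocalTimeOfSamples t)

lemma IsOccupationDensity.additiveFunctionalOfSamples_eq {w : ℝ → ℝ} {ℓ : ℝ → ℝ → ℝ}
    (h : IsOccupationDensity w ℓ) (g : ℝ → ℝ) (t : ℝ) :
    additiveFunctionalOfSamples g (fun q => w q) t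
      = ∫ s in 0..firstPassage (ℓ 0) t, g (w s) := by
  rw [additiveFunctionalOfSamples, h.invLocalTimeOfSamples_eq,
    setIntegral_pathOfSamples h.continuous _ (firstPassage_nonneg _ _)]

lemma measurable_sgnab (a b : ℝ) : Measurable (sgnab a b) :=
  Measurable.ite measurableSet_Ioi measurable_const
    (Measurable.ite measurableSet_Iio measurable_const measurable_const)

lemma sgnab_mul_of_pos (a b : ℝ) {r : ℝ} (hr : 0 < r) (x : ℝ) :
    sgnab a b (r * x) = sgnab a b x := by
  simp [sgnab, mul_pos_iff_of_pos_left hr, mul_neg_iff, hr, hr.not_gt]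

lemma integral_sgnab_mul_rpow_abs_scale (w : ℝ → ℝ) (a b p T : ℝ) {c : ℝ} (hc : 0 < c) :
    ∫ s in 0..(c ^ 2)⁻¹ * T, sgnab a b (c⁻¹ * w (c ^ 2 * s)) * |c⁻¹ * w (c ^ 2 * s)| ^ p
      = c ^ (-(p + 2)) * ∫ s in 0..T, sgnab a b (w s) * |w s| ^ p := by
  have hhom : ∀ x,
      sgnab a b (c⁻¹ * x) * |c⁻¹ * x| ^ p = c ^ (-p) * (sgnab a b x * |x| ^ p) := by
    intro x
    rw [sgnab_mul_of_pos a b (inv_pos.2 hc), abs_mul, abs_inv, abs_of_pos hc,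
      Real.mul_rpow (inv_nonneg.2 hc.le) (abs_nonneg x), Real.inv_rpow hc.le,
      ← Real.rpow_neg hc.le]
    ring
  simp_rw [hhom]
  rw [intervalIntegral.integral_const_mul, intervalIntegral.integral_comp_mul_left
    (fun s => sgnab a b (w s) * |w s| ^ p) (pow_ne_zero 2 hc.ne'), mul_zero,
    mul_inv_cancel_left₀ (pow_ne_zero 2 hc.ne'), smul_eq_mul, ← mul_assoc, neg_add,
    Real.rpow_add hc, Real.rpow_neg hc.le 2, Real.rpow_two]

lemma IsOccupationDensity.additiveFunctionalOfSamples_scale {w : ℝ → ℝ} {ℓ : ℝ → ℝ → ℝ}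
    (h : IsOccupationDensity w ℓ) (a b p : ℝ) {c : ℝ} (hc : 0 < c) (t : ℝ) :
    additiveFunctionalOfSamples (fun x => sgnab a b x * |x| ^ p)
        (fun q => c⁻¹ * w (c ^ 2 * q)) t
      = c ^ (-(p + 2)) * ∫ s in 0..firstPassage (ℓ 0) (c * t), sgnab a b (w s) * |w s| ^ p := by
  rw [(h.scale hc).additiveFunctionalOfSamples_eq]
  simp only [mul_zero]
  rw [firstPassage_scale (ℓ 0) t hc (pow_pos hc 2), integral_sgnab_mul_rpow_abs_scale w a b p _ hc]

lemma IsLocalTimeFamily.ae_isOccupationDensity {Ω : Type*} [MeasurableSpace Ω] {μ : Measure Ω}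
    {W : ℝ → Ω → ℝ} {L : ℝ → ℝ → Ω → ℝ} (hL : IsLocalTimeFamily μ W L)
    (hW : ∀ᵐ ω ∂μ, Continuous fun t => W t ω) :
    ∀ᵐ ω ∂μ, IsOccupationDensity (W · ω) (fun x u => L x u ω) := by
  filter_upwards [hW, hL.2] with ω hw hω
  obtain ⟨hcont, hmono, -, hocc⟩ := hω
  exact ⟨hw, fun u => hcont.comp (continuous_id.prodMk continuous_const), hmono 0, hocc⟩

lemma map_eq_map_of_ae_eq_comp {Ω β γ : Type*} [MeasurableSpace Ω] [MeasurableSpace β]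
    [MeasurableSpace γ] {μ : Measure Ω} {V V' : Ω → β} {X Y : Ω → γ} {Φ : β → γ}
    (hΦ : Measurable Φ) (hV : Measurable V) (hV' : Measurable V') (hlaw : μ.map V = μ.map V')
    (hX : X =ᵐ[μ] Φ ∘ V) (hY : Y =ᵐ[μ] Φ ∘ V') : μ.map X = μ.map Y := by
  rw [Measure.map_congr hX, Measure.map_congr hY, ← Measure.map_map hΦ hV,
    ← Measure.map_map hΦ hV', hlaw]

theorem strictly_stable_of_additive_functional_general
    {Ω : Type*} [MeasurableSpace Ω] (μ : Measure Ω) [IsProbabilityMeasure μ]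
    (W : ℝ → Ω → ℝ) (hW : IsBrownianMotion μ W)
    (L : ℝ → ℝ → Ω → ℝ) (hL : IsLocalTimeFamily μ W L)
    (α : ℝ) (a b : ℝ)
    (S : ℝ → Ω → ℝ)
    (hS : ∀ t ω, S t ω = ∫ s in (0:ℝ)..(invLocalTime L t ω),
        sgnab a b (W s ω) * |W s ω| ^ (1 / α - 2)) :
    ∀ c : ℝ, 0 < c →
      μ.map (fun ω => fun t : ℝ => S t ω) =
        μ.map (fun ω => fun t : ℝ => c ^ (-(1 / α)) * S (c * t) ω) := by
  intro c hc
  set g : ℝ → ℝ := fun x => sgnab a b x * |x| ^ (1 / α - 2)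
  have hg : Measurable g := (measurable_sgnab a b).mul (continuous_abs.measurable.pow_const _)
  have hpath := hL.ae_isOccupationDensity hW.2.2.1
  refine map_eq_map_of_ae_eq_comp (measurable_additiveFunctionalOfSamples hg)
    (measurable_pi_lambda _ fun _ => hW.1 _) (measurable_pi_lambda _ fun _ => (hW.scale hc).1 _)
    (hW.map_eval_eq (hW.scale hc) NNRat.cast_mono fun q => q.cast_nonneg) ?_ ?_
  · filter_upwards [hpath] with ω hω
    ext t
    rw [hS, invLocalTime_eq_firstPassage]
    exact (hω.additiveFunctionalOfSamples_eq g t).symm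
  · filter_upwards [hpath] with ω hω
    ext t
    rw [Function.comp_apply, hω.additiveFunctionalOfSamples_scale a b _ hc, hS,
      invLocalTime_eq_firstPassage, sub_add_cancel]

/-- For `α ∈ (0,1)`, the process `S_t = ∫₀^{τ_t} sgn_{a,b}(W_s)|W_s|^{1/α−2} ds`
is strictly `α`-stable: `(S_t)ₜ` has the same law (as a process) as
`(c^{−1/α} S_{ct})ₜ` for every `c > 0`. -/
theorem strictly_stable_of_additive_functional
    {Ω : Type*} [MeasurableSpace Ω] (μ : Measure Ω) [IsProbabilityMeasure μ]
    (W : ℝ → Ω → ℝ) (hW : IsBrownianMotion μ W)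
    (L : ℝ → ℝ → Ω → ℝ) (hL : IsLocalTimeFamily μ W L)
    (α : ℝ) (hα : α ∈ Set.Ioo (0 : ℝ) 1) (a b : ℝ)
    (S : ℝ → Ω → ℝ)
    (hS : ∀ t ω, S t ω = ∫ s in (0:ℝ)..(invLocalTime L t ω),
        sgnab a b (W s ω) * |W s ω| ^ (1 / α - 2)) :
    ∀ c : ℝ, 0 < c →
      μ.map (fun ω => fun t : ℝ => S t ω) =
        μ.map (fun ω => fun t : ℝ => c ^ (-(1 / α)) * S (c * t) ω) :=
  strictly_stable_of_additive_functional_general μ W hW L hL α a b S hS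
end

section
/- Define h_{a,b}(α) = (2^{α−2}π/(α sin(απ/2)))·(α^α/Γ(α))²·(sgn(a)|a|^α + sgn(b)|b|^α) for α > 0 and nonzero reals a, b. Then h_{a,b}(1) = (π/2)(a+b) and h_{a,b} is differentiable at 1 with h_{a,b}'(1) = (π/2)(a+b)[1 + log 2 + 2γ + (a·log|a| + b·log|b|)/(a+b)], where γ is the Euler–Mascheroni constant. -/
/-!
At `α = 1` every factor is elementary: `Γ(1) = 1`, `Γ'(1) = -γ`, `sin (π/2) = 1` and
`cos (π/2) = 0`. The logarithmic derivatives at `1` of the three factors of `h_{a,b}` are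
`log 2 - 1`, `2 (1 + γ)` and `(a log|a| + b log|b|)/(a + b)`; their sum is the logarithmic
derivative of `h_{a,b}` at `1`.
-/

open Real Filter Topology

namespace Real

theorem sign_mul_abs (x : ℝ) : sign x * |x| = x := by
  rcases lt_trichotomy x 0 with hx | rfl | hx
  · rw [sign_of_neg hx, abs_of_neg hx]; ring
  · simp
  · rw [sign_of_pos hx, abs_of_pos hx]; ring

theorem hasDerivAt_sign_mul_abs_rpow (x t : ℝ) :
    HasDerivAt (fun α => sign x * |x| ^ α) (sign x * |x| ^ t * log |x|) t := by
  rcases eq_or_ne x 0 with rfl | hx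
  · simpa using hasDerivAt_const t (0 : ℝ)
  · simpa [mul_assoc] using
      (hasStrictDerivAt_const_rpow (abs_pos.2 hx) t).hasDerivAt.const_mul (sign x)

theorem hasDerivAt_rpow_self {t : ℝ} (ht : 0 < t) :
    HasDerivAt (fun α => α ^ α) (t ^ t * (log t + 1)) t := by
  refine ((hasDerivAt_id t).rpow (hasDerivAt_id t) ht).congr_deriv ?_
  simp only [id_eq, rpow_sub_one ht.ne']
  field_simp
  ring

end Real

noncomputable def hAB (a b α : ℝ) : ℝ :=
  (2 ^ (α - 2) * π / (α * sin (α * π / 2))) * (α ^ α / Gamma α) ^ 2 *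
    (sign a * |a| ^ α + sign b * |b| ^ α)

theorem hAB_one (a b : ℝ) : hAB a b 1 = π / 2 * (a + b) := by
  simp only [hAB, rpow_one, one_mul, Gamma_one, div_one, one_pow, mul_one, Real.sign_mul_abs,
    sin_pi_div_two]
  rw [show (1 : ℝ) - 2 = -1 by norm_num, rpow_neg_one]
  ring

theorem hasDerivAt_hAB_one (a b : ℝ) :
    HasDerivAt (hAB a b) (π / 2 * ((1 + log 2 + 2 * eulerMascheroniConstant) * (a + b) +
      (a * log |a| + b * log |b|))) 1 := by
  have h_two_pow : HasDerivAt (fun α : ℝ => 2 ^ (α - 2) * π) (2 ^ (1 - 2 : ℝ) * log 2 * π) 1 := by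
    simpa using ((hasStrictDerivAt_const_rpow two_pos (1 - 2)).hasDerivAt.comp 1
      ((hasDerivAt_id 1).sub_const 2)).mul_const π
  have h_sin : HasDerivAt (fun α : ℝ => α * sin (α * π / 2)) 1 1 := by
    have := (hasDerivAt_id 1).mul
      ((hasDerivAt_sin _).comp 1 (((hasDerivAt_id 1).mul_const π).div_const 2))
    simpa [Function.comp_def, Pi.mul_def] using this
  have h_self := hasDerivAt_rpow_self one_pos
  have h_signed := (hasDerivAt_sign_mul_abs_rpow a 1).add (hasDerivAt_sign_mul_abs_rpow b 1)
  refine (((h_two_pow.div h_sin (by simp)).mul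
    ((h_self.div hasDerivAt_Gamma_one (by simp)).pow 2)).mul h_signed).congr_deriv ?_
  simp only [Pi.mul_apply, Pi.div_apply, Pi.pow_apply, Pi.add_apply, one_mul, mul_one, one_pow,
    div_one, rpow_one, Gamma_one, sin_pi_div_two, log_one, zero_add, ← mul_assoc,
    Real.sign_mul_abs]
  rw [show (1 : ℝ) - 2 = -1 by norm_num, rpow_neg_one]
  ring

theorem h_ab_value_and_deriv_at_one_general
    (a b : ℝ)
    (h : ℝ → ℝ)
    (hdef : ∀ α : ℝ, 0 < α →
      h α = (2 ^ (α - 2) * π / (α * Real.sin (α * π / 2))) *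
        (α ^ α / Real.Gamma α) ^ 2 *
        (Real.sign a * |a| ^ α + Real.sign b * |b| ^ α)) :
    h 1 = π / 2 * (a + b) ∧
    HasDerivAt h
      (π / 2 * (a + b) *
        (1 + Real.log 2 + 2 * Real.eulerMascheroniConstant +
          (a * Real.log |a| + b * Real.log |b|) / (a + b))) 1 := by
  have h_eq : h =ᶠ[𝓝 1] hAB a b :=
    eventually_of_mem (Ioi_mem_nhds one_pos) fun α hα => hdef α hα
  refine ⟨(hdef 1 one_pos).trans (hAB_one a b),
    ((hasDerivAt_hAB_one a b).congr_of_eventuallyEq h_eq).congr_deriv ?_⟩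
  -- When `a + b = 0` the quotient is the junk value `0`, and so is `a log|a| + b log|b|`.
  rcases eq_or_ne (a + b) 0 with hab | hab
  · obtain rfl : b = -a := by linarith
    rw [abs_neg]
    ring
  · field_simp

/-- `h_{a,b}(α) = (2^{α−2}π/(α sin(απ/2)))(α^α/Γ(α))²(sgn(a)|a|^α + sgn(b)|b|^α)`
satisfies `h_{a,b}(1) = (π/2)(a+b)` and is differentiable at `1` with derivative
`(π/2)(a+b)[1 + log 2 + 2γ + (a log|a| + b log|b|)/(a+b)]`. -/
theorem h_ab_value_and_deriv_at_one
    (a b : ℝ) (ha : a ≠ 0) (hb : b ≠ 0)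
    (h : ℝ → ℝ)
    (hdef : ∀ α : ℝ, 0 < α →
      h α = (2 ^ (α - 2) * π / (α * Real.sin (α * π / 2))) *
        (α ^ α / Real.Gamma α) ^ 2 *
        (Real.sign a * |a| ^ α + Real.sign b * |b| ^ α)) :
    h 1 = π / 2 * (a + b) ∧
    HasDerivAt h
      (π / 2 * (a + b) *
        (1 + Real.log 2 + 2 * Real.eulerMascheroniConstant +
          (a * Real.log |a| + b * Real.log |b|) / (a + b))) 1 :=
  h_ab_value_and_deriv_at_one_general a b h hdef
end

section
/- Let 𝔰 : ℝ → ℝ be a C¹ increasing bijection with 𝔰(0) = 0, σ, 𝔰' > 0 continuous, ψ = (𝔰'∘𝔰^{-1})·(σ∘𝔰^{-1}), and μ(dx) = κ[σ²(x)𝔰'(x)]^{-1}dx a finite measure normalized to be a probability. Let (W_t) be a Brownian motion with jointly continuous local times (L_t^x) and a_ε → 0 as ε → 0. Then for every φ ∈ L¹(μ), almost surely, for all T > 0, sup_{t∈[0,T]} |κ a_ε^{-1} ∫₀ᵗ φ(𝔰^{-1}(W_s/a_ε))/ψ²(W_s/a_ε) ds − μ(φ)·L_t^0| → 0 as ε →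 0. -/
/-
Fix a path `w` of the Brownian motion and its local times `ℓ x t`. By the occupation times
formula, `∫₀ᵗ G(w u) du = ∫ ℓ x t · G x dx`, and the substitution `x = c·s(v)` with `c = a_ε`
turns the left side of the theorem into `∫ φ(v) ℓ (c·s(v)) t μ(dv)`: the weight `κ c⁻¹ / ψ²`
exactly cancels the Jacobian `c·s'(v)` and produces the density of `μ`. The local time
vanishes off the compact range `w([0,T])`, so `x ↦ ℓ x ·|[0,T]` is a bounded continuous map into
the Banach space `C([0,T], ℝ)`, and dominated convergence there gives the uniform limit
`(∫ φ dμ) · ℓ 0 ·` as `c → 0`.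
-/

open Filter MeasureTheory Set ProbabilityTheory

open Function Topology

theorem Function.RightInverse.quasiMeasurePreserving {E : Type*} [NormedAddCommGroup E]
    [NormedSpace ℝ E] [FiniteDimensional ℝ E] [MeasurableSpace E] [BorelSpace E]
    {μ : Measure E} [μ.IsAddHaarMeasure] {f g : E → E} (hfg : RightInverse g f)
    (hf : Differentiable ℝ f) (hg : Measurable g) : Measure.QuasiMeasurePreserving g μ μ := by
  refine ⟨hg, Measure.AbsolutelyContinuous.mk fun A hA hA0 => ?_⟩
  rw [Measure.map_apply hg hA]
  exact measure_mono_null (show g ⁻¹' A ⊆ f '' A from fun x hx => ⟨g x, hx, hfg x⟩)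
    (addHaar_image_eq_zero_of_differentiableOn_of_addHaar_eq_zero μ hf.differentiableOn hA0)

theorem integral_deriv_smul_comp_of_strictMono {E : Type*} [NormedAddCommGroup E]
    [NormedSpace ℝ E] {f : ℝ → ℝ} (hf : Differentiable ℝ f) (hmono : StrictMono f)
    (hsurj : Surjective f) (g : ℝ → E) :
    ∫ v, deriv f v • g (f v) = ∫ x, g x := by
  have h := integral_image_eq_integral_abs_deriv_smul MeasurableSet.univ
    (fun v _ => (hf v).hasDerivAt.hasDerivWithinAt) hmono.injective.injOn g
  rw [image_univ, hsurj.range_eq, Measure.restrict_univ] at h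
  simp_rw [h, abs_of_nonneg hmono.monotone.deriv_nonneg]

def IsOccupationDensity_s15 (w : ℝ → ℝ) (t : ℝ) (ℓ : ℝ → ℝ) : Prop :=
  ∀ φ : ℝ → ℝ, Measurable φ → (∀ y, 0 ≤ φ y) → ∫ u in (0:ℝ)..t, φ (w u) = ∫ x, φ x * ℓ x

namespace IsOccupationDensity_s15

variable {w ℓ : ℝ → ℝ} {t : ℝ}

theorem integrable (h : IsOccupationDensity_s15 w t ℓ) (ht : 0 < t) : Integrable ℓ := by
  -- the Bochner integral of a non-integrable function is `0`, but `∫ ℓ = t` by the case `φ = 1`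
  by_contra hℓ
  have h1 := h 1 measurable_const fun _ => zero_le_one
  simp only [Pi.one_apply, one_mul, intervalIntegral.integral_const, smul_eq_mul, mul_one,
    sub_zero, integral_undef hℓ] at h1
  exact ht.ne' h1

theorem map_restrict_Ioc (h : IsOccupationDensity_s15 w t ℓ) (hw : Measurable w)
    (hℓ : ∀ x, 0 ≤ ℓ x) (hℓi : Integrable ℓ) (ht : 0 ≤ t) :
    (volume.restrict (Ioc 0 t)).map w = volume.withDensity fun x => ENNReal.ofReal (ℓ x) := by
  ext A hA
  have hocc := h (A.indicator 1) (measurable_one.indicator hA)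
    (indicator_nonneg fun _ _ => zero_le_one)
  simp_rw [intervalIntegral.integral_of_le ht, ← indicator_comp_right, ← indicator_mul_left,
    Pi.one_apply, one_mul, Pi.one_comp, integral_indicator_one (hw hA), integral_indicator hA]
    at hocc
  rw [Measure.map_apply hw hA, withDensity_apply _ hA, ← ofReal_measureReal, hocc,
    ofReal_integral_eq_lintegral_ofReal hℓi.integrableOn (ae_of_all _ hℓ)]

theorem intervalIntegral_comp {E : Type*} [NormedAddCommGroup E] [NormedSpace ℝ E]
    (h : IsOccupationDensity_s15 w t ℓ) (hw : Measurable w) (hℓ : ∀ x, 0 ≤ ℓ x)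
    (hℓm : Measurable ℓ) (hℓi : Integrable ℓ) (ht : 0 ≤ t) {G : ℝ → E}
    (hG : AEStronglyMeasurable G volume) :
    ∫ u in (0:ℝ)..t, G (w u) = ∫ x, ℓ x • G x := by
  have hmap := h.map_restrict_Ioc hw hℓ hℓi ht
  rw [intervalIntegral.integral_of_le ht, ← integral_map hw.aemeasurable
      (hmap ▸ hG.mono_ac (withDensity_absolutelyContinuous _ _)), hmap,
    integral_withDensity_eq_integral_toReal_smul hℓm.ennreal_ofReal
      (ae_of_all _ fun _ => ENNReal.ofReal_lt_top)]
  simp_rw [ENNReal.toReal_ofReal (hℓ _)]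

theorem eq_zero_of_notMem_image (h : IsOccupationDensity_s15 w t ℓ) (hw : Continuous w)
    (hℓ : Continuous ℓ) (hℓ0 : ∀ x, 0 ≤ ℓ x) (ht : 0 < t) {x : ℝ} (hx : x ∉ w '' Icc 0 t) :
    ℓ x = 0 := by
  have hU : IsOpen (w '' Icc 0 t)ᶜ := (isCompact_Icc.image hw).isClosed.isOpen_compl
  have hnull : (volume.restrict (Ioc 0 t)).map w (w '' Icc 0 t)ᶜ = 0 := by
    rw [Measure.map_apply hw.measurable hU.measurableSet,
      Measure.restrict_apply (hU.measurableSet.preimage hw.measurable)]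
    exact measure_mono_null (fun u hu => hu.1 ⟨u, Ioc_subset_Icc_self hu.2, rfl⟩) measure_empty
  rw [h.map_restrict_Ioc hw.measurable hℓ0 (h.integrable ht) ht.le,
    withDensity_apply _ hU.measurableSet,
    lintegral_eq_zero_iff hℓ.measurable.ennreal_ofReal] at hnull
  have hzero : ℓ =ᵐ[volume.restrict (w '' Icc 0 t)ᶜ] 0 := by
    filter_upwards [hnull] with y hy
    exact le_antisymm (ENNReal.ofReal_eq_zero.1 hy) (hℓ0 y)
  exact Measure.eqOn_open_of_ae_eq hzero hU hℓ.continuousOn continuousOn_const hx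

end IsOccupationDensity_s15

section LocalTime

variable {w : ℝ → ℝ} {ℓ : ℝ → ℝ → ℝ} {T : ℝ}

theorem localTime_eq_zero_of_notMem_image (hw : Continuous w)
    (hℓ : Continuous fun p : ℝ × ℝ => ℓ p.1 p.2) (hmono : ∀ x, Monotone (ℓ x))
    (h0 : ∀ x, ℓ x 0 = 0) (hocc : ∀ t, 0 ≤ t → IsOccupationDensity_s15 w t (ℓ · t))
    (hT : 0 < T) {x t : ℝ} (ht : t ∈ Icc 0 T) (hx : x ∉ w '' Icc 0 T) : ℓ x t = 0 := by
  have hnonneg : ∀ y s, 0 ≤ s → 0 ≤ ℓ y s := fun y s hs => h0 y ▸ hmono y hs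
  have hT0 : ℓ x T = 0 := (hocc T hT.le).eq_zero_of_notMem_image hw (by fun_prop)
    (fun y => hnonneg y T hT.le) hT hx
  exact le_antisymm (hT0 ▸ hmono x ht.2) (hnonneg x t ht.1)

theorem exists_abs_localTime_le (hw : Continuous w)
    (hℓ : Continuous fun p : ℝ × ℝ => ℓ p.1 p.2) (hmono : ∀ x, Monotone (ℓ x))
    (h0 : ∀ x, ℓ x 0 = 0) (hocc : ∀ t, 0 ≤ t → IsOccupationDensity_s15 w t (ℓ · t))
    (hT : 0 < T) : ∃ C, ∀ x, ∀ t ∈ Icc 0 T, |ℓ x t| ≤ C := by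
  obtain ⟨C, hC⟩ :=
    ((isCompact_Icc.image hw).prod isCompact_Icc).exists_bound_of_continuousOn hℓ.continuousOn
  refine ⟨max C 0, fun x t ht => ?_⟩
  by_cases hx : x ∈ w '' Icc 0 T
  · exact (hC (x, t) ⟨hx, ht⟩).trans (le_max_left _ _)
  · rw [localTime_eq_zero_of_notMem_image hw hℓ hmono h0 hocc hT ht hx, abs_zero]
    exact le_max_right _ _

theorem integrable_localTime (hw : Continuous w)
    (hℓ : Continuous fun p : ℝ × ℝ => ℓ p.1 p.2) (hmono : ∀ x, Monotone (ℓ x))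
    (h0 : ∀ x, ℓ x 0 = 0) (hocc : ∀ t, 0 ≤ t → IsOccupationDensity_s15 w t (ℓ · t))
    (hT : 0 < T) {t : ℝ} (ht : t ∈ Icc 0 T) : Integrable (ℓ · t) :=
  Continuous.integrable_of_hasCompactSupport (by fun_prop) <|
    HasCompactSupport.intro (isCompact_Icc.image hw) fun _ hx =>
      localTime_eq_zero_of_notMem_image hw hℓ hmono h0 hocc hT ht hx

end LocalTime

section DominatedConvergence

variable {α ι E : Type*} [MeasurableSpace α] {μ : Measure α} {l : Filter ι}
  [l.IsCountablyGenerated] {φ g : α → ℝ} {c : ι → ℝ}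

theorem tendsto_integral_smul_comp_mul [NormedAddCommGroup E] [NormedSpace ℝ E] [CompleteSpace E]
    {F : ℝ → E} (hF : Continuous F) {C : ℝ} (hC : ∀ x, ‖F x‖ ≤ C) (hφ : Integrable φ μ)
    (hg : Measurable g) (hc : Tendsto c l (𝓝 0)) :
    Tendsto (fun i => ∫ v, φ v • F (c i * g v) ∂μ) l (𝓝 ((∫ v, φ v ∂μ) • F 0)) := by
  rw [← integral_smul_const]
  refine tendsto_integral_filter_of_dominated_convergence (fun v => ‖φ v‖ * C)
    (.of_forall fun i => hφ.aestronglyMeasurable.smul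
      (hF.comp_aestronglyMeasurable (hg.const_mul _).aestronglyMeasurable))
    (.of_forall fun i => ae_of_all _ fun v => ?_) (hφ.norm.mul_const C) (ae_of_all _ fun v => ?_)
  · rw [norm_smul]
    exact mul_le_mul_of_nonneg_left (hC _) (norm_nonneg _)
  · exact tendsto_const_nhds.smul ((hF.tendsto 0).comp (by simpa using hc.mul_const (g v)))

theorem tendstoUniformlyOn_integral_mul_comp_mul {X : Type*} [TopologicalSpace X] {K : Set X}
    (hK : IsCompact K) {ℓ : ℝ → X → ℝ} (hℓ : Continuous fun p : ℝ × X => ℓ p.1 p.2) {C : ℝ}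
    (hC : ∀ x, ∀ t ∈ K, |ℓ x t| ≤ C) (hφ : Integrable φ μ) (hg : Measurable g)
    (hc : Tendsto c l (𝓝 0)) :
    TendstoUniformlyOn (fun i t => ∫ v, φ v * ℓ (c i * g v) t ∂μ)
      (fun t => (∫ v, φ v ∂μ) * ℓ 0 t) l K := by
  have := isCompact_iff_compactSpace.mp hK
  -- uniform convergence on `K` is convergence in `C(K, ℝ)`, where dominated convergence applies
  let Φ : C(ℝ, C(K, ℝ)) := ContinuousMap.curry ⟨fun p : ℝ × K => ℓ p.1 p.2, by fun_prop⟩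
  have hΦ : ∀ x, ‖Φ x‖ ≤ max C 0 := fun x =>
    (ContinuousMap.norm_le _ (le_max_right _ _)).2 fun t => (hC x t t.2).trans (le_max_left _ _)
  have hlim := tendsto_integral_smul_comp_mul Φ.continuous hΦ hφ hg hc
  rw [ContinuousMap.tendsto_iff_tendstoUniformly] at hlim
  rw [tendstoUniformlyOn_iff_tendstoUniformly_comp_coe]
  convert hlim using 1
  · ext i t
    have hint : Integrable (fun v => φ v • Φ (c i * g v)) μ := hφ.smul_bdd _
      (Φ.continuous.comp_aestronglyMeasurable (hg.const_mul _).aestronglyMeasurable)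
      (ae_of_all _ fun _ => hΦ _)
    rw [ContinuousMap.integral_apply hint]
    rfl
  · ext t
    rfl

end DominatedConvergence

theorem mul_intervalIntegral_comp_div_eq_integral_withDensity {s sInv σ ψ w ℓ φ : ℝ → ℝ}
    {κ c t : ℝ} {μ : Measure ℝ} (hs : Differentiable ℝ s) (hsmono : StrictMono s)
    (hs' : ∀ x, 0 < deriv s x) (hsInv : LeftInverse sInv s ∧ RightInverse sInv s)
    (hσ : Measurable σ) (hσpos : ∀ x, 0 < σ x) (hψ : ∀ w, ψ w = deriv s (sInv w) * σ (sInv w))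
    (hκ : 0 < κ)
    (hμ : μ = volume.withDensity fun x => ENNReal.ofReal (κ * ((σ x) ^ 2 * deriv s x)⁻¹))
    (hocc : IsOccupationDensity_s15 w t ℓ) (hw : Measurable w) (hℓ : ∀ x, 0 ≤ ℓ x)
    (hℓm : Measurable ℓ) (hℓi : Integrable ℓ) (ht : 0 ≤ t) (hφ : AEStronglyMeasurable φ μ)
    (hc : 0 < c) :
    κ * c⁻¹ * ∫ u in (0:ℝ)..t, φ (sInv (w u / c)) / (ψ (w u / c)) ^ 2
      = ∫ v, φ v * ℓ (c * s v) ∂μ := by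
  have hsInvm : Measurable sInv := Monotone.measurable fun x y hxy =>
    hsmono.le_iff_le.1 (by rwa [hsInv.2 x, hsInv.2 y])
  have hψm : Measurable ψ := by
    rw [funext hψ]
    exact ((measurable_deriv s).comp hsInvm).mul (hσ.comp hsInvm)
  have hρm : Measurable fun x => κ * ((σ x) ^ 2 * deriv s x)⁻¹ :=
    (((hσ.pow_const 2).mul (measurable_deriv s)).inv).const_mul κ
  have hρpos : ∀ x, 0 < κ * ((σ x) ^ 2 * deriv s x)⁻¹ := fun x => by
    have := hσpos x; have := hs' x; positivity
  have hvol : volume ≪ μ := hμ ▸ withDensity_absolutelyContinuous' hρm.ennreal_ofReal.aemeasurable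
    (ae_of_all _ fun x => (ENNReal.ofReal_pos.2 (hρpos x)).ne')
  have hcs : RightInverse (fun x => sInv (x / c)) (fun v => c * s v) := fun x => by
    simp only [hsInv.2 (x / c), mul_div_cancel₀ _ hc.ne']
  have hcs_diff : Differentiable ℝ fun v => c * s v := hs.const_mul c
  have hG : AEStronglyMeasurable (fun x => φ (sInv (x / c)) / ψ (x / c) ^ 2) volume :=
    ((hφ.mono_ac hvol).comp_quasiMeasurePreserving
      (hcs.quasiMeasurePreserving hcs_diff (hsInvm.comp (measurable_id.div_const c)))).div₀
      ((hψm.comp (measurable_id.div_const c)).pow_const 2).aestronglyMeasurable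
  rw [hocc.intervalIntegral_comp hw hℓ hℓm hℓi ht hG,
    ← integral_deriv_smul_comp_of_strictMono hcs_diff (hsmono.const_mul hc) hcs.surjective, hμ,
    integral_withDensity_eq_integral_toReal_smul hρm.ennreal_ofReal
      (ae_of_all _ fun _ => ENNReal.ofReal_lt_top), ← integral_const_mul]
  congr 1
  ext v
  have := hσpos v
  have := hs' v
  simp only [smul_eq_mul, deriv_const_mul c (hs v), mul_div_cancel_left₀ _ hc.ne', hψ,
    hsInv.1 v, ENNReal.toReal_ofReal (hρpos v).le]
  field_simp

theorem additive_functional_to_local_time_general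
    {Ω : Type*} [MeasurableSpace Ω] (P : Measure Ω)
    (W : ℝ → Ω → ℝ) (hW : IsBrownianMotion P W)
    (L : ℝ → ℝ → Ω → ℝ) (hL : IsLocalTimeFamily P W L)
    (s : ℝ → ℝ) (hsC1 : ContDiff ℝ 1 s) (hsmono : StrictMono s)
    (hs' : ∀ x, 0 < deriv s x)
    (sInv : ℝ → ℝ) (hsInv : Function.LeftInverse sInv s ∧
      Function.RightInverse sInv s)
    (σ : ℝ → ℝ) (hσ : Continuous σ) (hσpos : ∀ x, 0 < σ x)
    (ψ : ℝ → ℝ) (hψ : ∀ w, ψ w = deriv s (sInv w) * σ (sInv w))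
    (κ : ℝ) (hκ : 0 < κ)
    (μ : Measure ℝ)
    (hμ : μ = volume.withDensity
      (fun x => ENNReal.ofReal (κ * ((σ x) ^ 2 * deriv s x)⁻¹)))
    (a : ℝ → ℝ) (hapos : ∀ ε, 0 < ε → 0 < a ε)
    (ha : Tendsto a (nhdsWithin 0 (Set.Ioi 0)) (nhds 0))
    (φ : ℝ → ℝ) (hφint : Integrable φ μ) :
    ∀ᵐ ω ∂P, ∀ T : ℝ, 0 < T →
      TendstoUniformlyOn
        (fun ε t => κ * (a ε)⁻¹ *
          ∫ u in (0:ℝ)..t, φ (sInv (W u ω / a ε)) / (ψ (W u ω / a ε)) ^ 2)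
        (fun t => (∫ x, φ x ∂μ) * L 0 t ω)
        (nhdsWithin 0 (Set.Ioi 0)) (Set.Icc 0 T) := by
  filter_upwards [hW.2.2.1, hL.2] with ω hw ⟨hℓ, hmono, h0, hocc⟩ T hT
  obtain ⟨C, hC⟩ := exists_abs_localTime_le hw hℓ hmono h0 hocc hT
  refine (tendstoUniformlyOn_integral_mul_comp_mul isCompact_Icc hℓ hC hφint
    hsC1.continuous.measurable ha).congr ?_
  filter_upwards [self_mem_nhdsWithin] with ε hε t ht
  exact (mul_intervalIntegral_comp_div_eq_integral_withDensity (hsC1.differentiable one_ne_zero)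
    hsmono hs' hsInv hσ.measurable hσpos hψ hκ hμ (hocc t ht.1) hw.measurable
    (fun x => h0 x ▸ hmono x ht.1) (by fun_prop)
    (integrable_localTime hw hℓ hmono h0 hocc hT ht) ht.1 hφint.1 (hapos ε hε)).symm

/-- Convergence of rescaled additive functionals towards the local time at 0:
for every `φ ∈ L¹(μ)`, a.s., for all `T > 0`,
`sup_{t∈[0,T]} |κ a_ε^{-1} ∫₀ᵗ φ(𝔰⁻¹(W_s/a_ε))/ψ²(W_s/a_ε) ds − μ(φ) L_t^0| → 0`. -/
theorem additive_functional_to_local_time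
    {Ω : Type*} [MeasurableSpace Ω] (P : Measure Ω) [IsProbabilityMeasure P]
    (W : ℝ → Ω → ℝ) (hW : IsBrownianMotion P W)
    (L : ℝ → ℝ → Ω → ℝ) (hL : IsLocalTimeFamily P W L)
    (s : ℝ → ℝ) (hsC1 : ContDiff ℝ 1 s) (hsmono : StrictMono s)
    (hsbij : Function.Bijective s) (hs0 : s 0 = 0)
    (hs' : ∀ x, 0 < deriv s x)
    (sInv : ℝ → ℝ) (hsInv : Function.LeftInverse sInv s ∧
      Function.RightInverse sInv s)
    (σ : ℝ → ℝ) (hσ : Continuous σ) (hσpos : ∀ x, 0 < σ x)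
    (ψ : ℝ → ℝ) (hψ : ∀ w, ψ w = deriv s (sInv w) * σ (sInv w))
    (κ : ℝ) (hκ : 0 < κ)
    (μ : Measure ℝ)
    (hμ : μ = volume.withDensity
      (fun x => ENNReal.ofReal (κ * ((σ x) ^ 2 * deriv s x)⁻¹)))
    (hμprob : IsProbabilityMeasure μ)
    (a : ℝ → ℝ) (hapos : ∀ ε, 0 < ε → 0 < a ε)
    (ha : Tendsto a (nhdsWithin 0 (Set.Ioi 0)) (nhds 0))
    (φ : ℝ → ℝ) (hφint : Integrable φ μ) :
    ∀ᵐ ω ∂P, ∀ T : ℝ, 0 < T →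
      TendstoUniformlyOn
        (fun ε t => κ * (a ε)⁻¹ *
          ∫ u in (0:ℝ)..t, φ (sInv (W u ω / a ε)) / (ψ (W u ω / a ε)) ^ 2)
        (fun t => (∫ x, φ x ∂μ) * L 0 t ω)
        (nhdsWithin 0 (Set.Ioi 0)) (Set.Icc 0 T) :=
  additive_functional_to_local_time_general P W hW L hL s hsC1 hsmono hs' sInv hsInv σ hσ hσpos ψ hψ
    κ hκ μ hμ a hapos ha φ hφint
end

section
/- Let b, σ : ℝ → ℝ be continuous with σ > 0, 𝔰 the scale function, m = [σ²𝔰']^{-1} the speed density with κ^{-1} = ∫_ℝ m < ∞, and μ = κm·dx. Let f be continuous with μ(f) = 0, and define g(x) = 2∫₀ˣ 𝔰'(v)·(∫ᵥ^∞ f(u)[σ²(u)𝔰'(u)]^{-1}du)·dv (assuming the inner integral is finite for all v). Then g is C² and solves the Poisson-type equation 2b(x)g'(x) + σ²(x)g''(x) = −2f(x) for all x ∈ ℝ. Moreover, since μ(f) = 0, g admits the alternative representation g(x) = −2∫₀ˣ 𝔰'(v)·(∫_{−∞}^ᵛ f(u)[σ²(u)𝔰'(u)]^{-1}du)·dv.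 -/
open Filter MeasureTheory Set intervalIntegral

/-!
Write `𝔰' = exp(-2∫₀ˣ b/σ²)` and `G(v) = ∫ᵥ^∞ f m`, so that `g' = 2𝔰'G`. Since
`𝔰'' = -2(b/σ²)𝔰'` and `G' = -f m = -f/(σ²𝔰')`, the product rule gives
`σ²g'' = -2b g' - 2f`. Because `m` is a positive multiple of the density of `μ`, `μ(f) = 0` says
`∫_ℝ f m = 0`, i.e. `G(v) = -∫_{-∞}^v f m`, which is the second representation of `g`.
-/

theorem contDiff_two_of_hasDerivAt {F : Type*} [NormedAddCommGroup F] [NormedSpace ℝ F]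
    {g g' g'' : ℝ → F} (hg : ∀ x, HasDerivAt g (g' x) x) (hg' : ∀ x, HasDerivAt g' (g'' x) x)
    (hg'' : Continuous g'') : ContDiff ℝ 2 g := by
  rw [show (2 : WithTop ℕ∞) = 1 + 1 from rfl, contDiff_succ_iff_deriv,
    funext fun x => (hg x).deriv, contDiff_one_iff_deriv, funext fun x => (hg' x).deriv]
  exact ⟨fun x => (hg x).differentiableAt, by simp, fun x => (hg' x).differentiableAt, hg''⟩

section WithDensity

variable {α E : Type*} [MeasurableSpace α] [NormedAddCommGroup E] [NormedSpace ℝ E]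
  {μ : Measure α} {d : α → ℝ}

theorem integrable_withDensity_ofReal_iff_s17 (hd : Measurable d) (hd0 : ∀ x, 0 ≤ d x) {g : α → E} :
    Integrable g (μ.withDensity fun x => ENNReal.ofReal (d x)) ↔
      Integrable (fun x => d x • g x) μ := by
  rw [integrable_withDensity_iff_integrable_smul' hd.ennreal_ofReal
    (ae_of_all _ fun _ => ENNReal.ofReal_lt_top)]
  simp only [ENNReal.toReal_ofReal (hd0 _)]

theorem integral_withDensity_ofReal (hd : Measurable d) (hd0 : ∀ x, 0 ≤ d x) (g : α → E) :
    ∫ x, g x ∂μ.withDensity (fun x => ENNReal.ofReal (d x)) = ∫ x, d x • g x ∂μ := by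
  rw [integral_withDensity_eq_integral_toReal_smul hd.ennreal_ofReal
    (ae_of_all _ fun _ => ENNReal.ofReal_lt_top)]
  simp only [ENNReal.toReal_ofReal (hd0 _)]

end WithDensity

theorem integral_Ioi_eq_neg_integral_Iio {E : Type*} [NormedAddCommGroup E] [NormedSpace ℝ E]
    {h : ℝ → E} (hint : Integrable h) (hzero : ∫ u, h u = 0) (v : ℝ) :
    ∫ u in Ioi v, h u = -∫ u in Iio v, h u := by
  have hsplit := integral_Iio_add_Ici (b := v) hint.integrableOn hint.integrableOn
  rw [hzero, integral_Ici_eq_integral_Ioi] at hsplit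
  exact eq_neg_of_add_eq_zero_right hsplit

theorem hasDerivAt_integral_Ioi {E : Type*} [NormedAddCommGroup E] [NormedSpace ℝ E]
    [CompleteSpace E] {h : ℝ → E} (hh : Continuous h) (hint : ∀ v, IntegrableOn h (Ioi v))
    (x : ℝ) : HasDerivAt (fun v => ∫ u in Ioi v, h u) (-h x) x := by
  have htail : (fun v => ∫ u in Ioi v, h u) =
      fun v => (∫ u in Ioi 0, h u) - ∫ u in (0 : ℝ)..v, h u := by
    funext v
    rw [← integral_interval_add_Ioi' (hh.intervalIntegrable 0 v) (hint v), add_sub_cancel_left]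
  rw [htail]
  exact (hh.integral_hasStrictDerivAt 0 x).hasDerivAt.const_sub _

theorem continuous_integral_Ioi {E : Type*} [NormedAddCommGroup E] [NormedSpace ℝ E]
    [CompleteSpace E] {h : ℝ → E} (hh : Continuous h) (hint : ∀ v, IntegrableOn h (Ioi v)) :
    Continuous fun v => ∫ u in Ioi v, h u :=
  continuous_iff_continuousAt.2 fun v => (hasDerivAt_integral_Ioi hh hint v).continuousAt

/-- With `c = b / σ²` this is the derivative `𝔰'` of the scale function. -/
noncomputable def scaleDensity (c : ℝ → ℝ) (x : ℝ) : ℝ :=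
  Real.exp (-2 * ∫ u in (0 : ℝ)..x, c u)

theorem scaleDensity_pos (c : ℝ → ℝ) (x : ℝ) : 0 < scaleDensity c x := Real.exp_pos _

theorem hasDerivAt_scaleDensity {c : ℝ → ℝ} (hc : Continuous c) (x : ℝ) :
    HasDerivAt (scaleDensity c) (-2 * c x * scaleDensity c x) x := by
  have := ((hc.integral_hasStrictDerivAt 0 x).hasDerivAt.const_mul (-2)).exp
  rwa [mul_comm] at this

theorem continuous_scaleDensity {c : ℝ → ℝ} (hc : Continuous c) : Continuous (scaleDensity c) :=
  continuous_iff_continuousAt.2 fun x => (hasDerivAt_scaleDensity hc x).continuousAt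

theorem deriv_integral_scaleDensity {c : ℝ → ℝ} (hc : Continuous c) :
    deriv (fun x => ∫ v in (0 : ℝ)..x, scaleDensity c v) = scaleDensity c :=
  funext fun x => (continuous_scaleDensity hc).deriv_integral _ 0 x

noncomputable def poissonSolution (c h : ℝ → ℝ) (x : ℝ) : ℝ :=
  2 * ∫ v in (0 : ℝ)..x, scaleDensity c v * ∫ u in Ioi v, h u

section PoissonSolution

variable {c h : ℝ → ℝ}

theorem hasDerivAt_poissonSolution (hc : Continuous c) (hh : Continuous h)
    (hint : ∀ v, IntegrableOn h (Ioi v)) (x : ℝ) :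
    HasDerivAt (poissonSolution c h) (2 * (scaleDensity c x * ∫ u in Ioi x, h u)) x := by
  have hcont : Continuous fun v => scaleDensity c v * ∫ u in Ioi v, h u :=
    (continuous_scaleDensity hc).mul (continuous_integral_Ioi hh hint)
  exact (hcont.integral_hasStrictDerivAt 0 x).hasDerivAt.const_mul 2

theorem hasDerivAt_deriv_poissonSolution (hc : Continuous c) (hh : Continuous h)
    (hint : ∀ v, IntegrableOn h (Ioi v)) (x : ℝ) :
    HasDerivAt (fun x => 2 * (scaleDensity c x * ∫ u in Ioi x, h u))
      (-2 * c x * (2 * (scaleDensity c x * ∫ u in Ioi x, h u)) - 2 * scaleDensity c x * h x) x := by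
  refine (((hasDerivAt_scaleDensity hc x).fun_mul
    (hasDerivAt_integral_Ioi hh hint x)).const_mul 2).congr_deriv ?_
  ring

theorem contDiff_poissonSolution (hc : Continuous c) (hh : Continuous h)
    (hint : ∀ v, IntegrableOn h (Ioi v)) : ContDiff ℝ 2 (poissonSolution c h) := by
  refine contDiff_two_of_hasDerivAt (hasDerivAt_poissonSolution hc hh hint)
    (hasDerivAt_deriv_poissonSolution hc hh hint) ?_
  have := continuous_scaleDensity hc
  have := continuous_integral_Ioi hh hint
  fun_prop

theorem deriv_deriv_poissonSolution (hc : Continuous c) (hh : Continuous h)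
    (hint : ∀ v, IntegrableOn h (Ioi v)) (x : ℝ) :
    deriv (deriv (poissonSolution c h)) x =
      -2 * c x * deriv (poissonSolution c h) x - 2 * scaleDensity c x * h x := by
  rw [funext fun x => (hasDerivAt_poissonSolution hc hh hint x).deriv,
    (hasDerivAt_deriv_poissonSolution hc hh hint x).deriv]

theorem poissonSolution_eq_neg_integral_Iio (hint : Integrable h) (hzero : ∫ u, h u = 0)
    (x : ℝ) :
    poissonSolution c h x = -2 * ∫ v in (0 : ℝ)..x, scaleDensity c v * ∫ u in Iio v, h u := by
  simp only [poissonSolution, integral_Ioi_eq_neg_integral_Iio hint hzero, mul_neg,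
    intervalIntegral.integral_neg]
  ring

end PoissonSolution

theorem integrable_mul_and_integral_mul_eq_zero_of_withDensity {α : Type*} [MeasurableSpace α]
    {ν : Measure α} {m f : α → ℝ} {κ : ℝ} (hm : Measurable m) (hm0 : ∀ x, 0 ≤ m x) (hκ : 0 < κ)
    (hf : Integrable f (ν.withDensity fun x => ENNReal.ofReal (κ * m x)))
    (hfzero : ∫ x, f x ∂ν.withDensity (fun x => ENNReal.ofReal (κ * m x)) = 0) :
    Integrable (fun x => f x * m x) ν ∧ ∫ x, f x * m x ∂ν = 0 := by
  have hd : Measurable fun x => κ * m x := hm.const_mul κ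
  have hd0 : ∀ x, 0 ≤ κ * m x := fun x => mul_nonneg hκ.le (hm0 x)
  have hscale : (fun x => (κ * m x) • f x) = fun x => κ * (f x * m x) := by
    funext x; rw [smul_eq_mul]; ring
  rw [integrable_withDensity_ofReal_iff_s17 hd hd0, hscale, integrable_const_mul_iff
    (isUnit_iff_ne_zero.2 hκ.ne')] at hf
  rw [integral_withDensity_ofReal hd hd0, hscale, MeasureTheory.integral_const_mul,
    mul_eq_zero, or_iff_right hκ.ne'] at hfzero
  exact ⟨hf, hfzero⟩

/-- Solution of the Poisson equation: with `𝔰` the scale function,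
`g(x) = 2∫₀ˣ 𝔰'(v)(∫ᵥ^∞ f(u)[σ²(u)𝔰'(u)]^{-1}du)dv` is `C²`, solves
`2bg' + σ²g'' = −2f`, and since `μ(f) = 0` it also equals
`−2∫₀ˣ 𝔰'(v)(∫_{−∞}^ᵛ f(u)[σ²(u)𝔰'(u)]^{-1}du)dv`. -/
theorem poisson_equation_solution
    (b σ : ℝ → ℝ) (hb : Continuous b) (hσ : Continuous σ)
    (hσpos : ∀ x, 0 < σ x)
    (s : ℝ → ℝ)
    (hs : ∀ x, s x = ∫ v in (0 : ℝ)..x,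
        Real.exp (-2 * ∫ u in (0 : ℝ)..v, b u / (σ u) ^ 2))
    (m : ℝ → ℝ) (hm : ∀ x, m x = ((σ x) ^ 2 * deriv s x)⁻¹)
    (hmint : Integrable m)
    (κ : ℝ) (hκ : κ = (∫ x, m x)⁻¹)
    (μ : Measure ℝ)
    (hμ : μ = volume.withDensity (fun x => ENNReal.ofReal (κ * m x)))
    (f : ℝ → ℝ) (hf : Continuous f)
    (hfint : Integrable f μ) (hfmean : ∫ x, f x ∂μ = 0)
    (hinner : ∀ v : ℝ, IntegrableOn (fun u => f u * m u) (Set.Ioi v))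
    (g : ℝ → ℝ)
    (hg : ∀ x, g x = 2 * ∫ v in (0 : ℝ)..x,
        deriv s v * ∫ u in Set.Ioi v, f u * m u) :
    ContDiff ℝ 2 g ∧
    (∀ x, 2 * b x * deriv g x + (σ x) ^ 2 * deriv (deriv g) x = -2 * f x) ∧
    (∀ x, g x = -2 * ∫ v in (0 : ℝ)..x,
        deriv s v * ∫ u in Set.Iio v, f u * m u) := by
  have hσ2 : ∀ x, σ x ^ 2 ≠ 0 := fun x => pow_ne_zero 2 (hσpos x).ne'
  set c : ℝ → ℝ := fun u => b u / σ u ^ 2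
  have hc : Continuous c := hb.div (hσ.pow 2) hσ2
  have hs' : deriv s = scaleDensity c := by
    rw [show s = fun x => ∫ v in (0 : ℝ)..x, scaleDensity c v from funext hs]
    exact deriv_integral_scaleDensity hc
  have hm' : m = fun x => (σ x ^ 2 * scaleDensity c x)⁻¹ := funext fun x => by rw [hm, hs']
  have hmpos : ∀ x, 0 < m x := fun x => by
    rw [hm']; exact inv_pos.2 (mul_pos (pow_pos (hσpos x) 2) (scaleDensity_pos c x))
  have hmcont : Continuous m := by
    rw [hm']
    exact ((hσ.pow 2).mul (continuous_scaleDensity hc)).inv₀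
      fun x => mul_ne_zero (hσ2 x) (scaleDensity_pos c x).ne'
  have hκpos : 0 < κ := by
    rw [hκ, inv_pos]
    exact integral_pos_of_integrable_nonneg_nonzero (x := 0) hmcont hmint
      (fun x => (hmpos x).le) (hmpos 0).ne'
  have hfmcont : Continuous fun u => f u * m u := hf.mul hmcont
  obtain ⟨hfm, hfm0⟩ := integrable_mul_and_integral_mul_eq_zero_of_withDensity
    hmcont.measurable (fun x => (hmpos x).le) hκpos (hμ ▸ hfint) (hμ ▸ hfmean)
  obtain rfl : g = poissonSolution c fun u => f u * m u := funext fun x => by rw [hg, hs']; rfl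
  refine ⟨contDiff_poissonSolution hc hfmcont hinner, fun x => ?_, fun x => ?_⟩
  · rw [deriv_deriv_poissonSolution hc hfmcont hinner,
      congrFun hm' x, show c x = b x / σ x ^ 2 from rfl]
    field_simp [(hσpos x).ne', (scaleDensity_pos c x).ne']
    ring
  · rw [hs', poissonSolution_eq_neg_integral_Iio hfm hfm0]
end

section
/- In the setting above (g defined via the scale function from f), suppose additionally that there exist α > 2, reals f₊, f₋, and a continuous slowly varying ℓ such that [σ(x)𝔰'(x)]^{-2}|𝔰(x)|^{2−1/α}ℓ(|𝔰(x)|)f(x) → f₊/f₋ as x → ±∞. Then g'·σ ∈ L²(μ), i.e. ∫_ℝ (g'(x)σ(x))² μ(dx) < ∞. -/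
/-!
Write `e = s'`, `F = f m` and `T x = ∫_{(x,∞)} F`. Then `g' = 2 e T` and `σ² m = 1 / e`, so
`(g' σ)² κ m = 4 κ e T²` and the claim is the integrability of `e T²` on `ℝ`.

Near `+∞`, since `s` is increasing, either `s` is bounded, and then `e = s'` is integrable there
while `T` is bounded, or `s → ∞`. In the latter case the hypothesis, combined with the bound
`l y ≥ c y ^ (-δ)` (which follows from `l (2y) / l y → 1` and positivity of `l` on compacts),
gives `|F| ≤ C e s ^ (δ - p)` with `p = 2 - 1/α > 3/2`. Integrating in the variable `s` yields
`|T| ≤ C' s ^ (δ - p + 1)`, so `e T² ≤ C'' e s ^ (2 (δ - p + 1))`, which is integrable near `+∞`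
for `δ` small because `2 (δ - p + 1) < -1`. Near `-∞` the same argument applies to the reflected
data `x ↦ -s (-x)`, `F (-x)`: because `∫ F = 0`, their tail integral is `-T (-x)`.
-/

open Filter MeasureTheory Set intervalIntegral

open Asymptotics Topology

theorem mul_div_rpow_neg_le_of_doubling {l : ℝ → ℝ} {Y c δ : ℝ} (hY : 0 < Y) (hc : 0 ≤ c)
    (hδ : 0 ≤ δ) (hbase : ∀ y ∈ Icc Y (2 * Y), c ≤ l y)
    (hdouble : ∀ y, Y ≤ y → 2 ^ (-δ) * l y ≤ l (2 * y)) {y : ℝ} (hy : Y ≤ y) :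
    c * (y / Y) ^ (-δ) ≤ l y := by
  suffices h : ∀ n : ℕ, ∀ y ∈ Icc Y (2 ^ n * (2 * Y)), c * (y / Y) ^ (-δ) ≤ l y by
    obtain ⟨n, hn⟩ := pow_unbounded_of_one_lt (y / (2 * Y)) one_lt_two
    exact h n y ⟨hy, ((div_lt_iff₀ (by positivity)).mp hn).le⟩
  intro n
  induction n with
  | zero =>
    intro y hy
    have hy1 : 1 ≤ y / Y := (one_le_div hY).mpr hy.1
    calc c * (y / Y) ^ (-δ) ≤ c * 1 := by
          gcongr; exact Real.rpow_le_one_of_one_le_of_nonpos hy1 (by linarith)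
      _ ≤ l y := by simpa using hbase y (by simpa using hy)
  | succ n ih =>
    rintro y ⟨hYy, hy⟩
    by_cases hyn : y ≤ 2 ^ n * (2 * Y)
    · exact ih y ⟨hYy, hyn⟩
    have hhalf : y / 2 ∈ Icc Y (2 ^ n * (2 * Y)) := by
      constructor
      · nlinarith [one_le_pow₀ (M₀ := ℝ) (n := n) one_le_two]
      · rw [pow_succ] at hy; linarith
    calc c * (y / Y) ^ (-δ) = 2 ^ (-δ) * (c * (y / 2 / Y) ^ (-δ)) := by
          rw [show y / Y = 2 * (y / 2 / Y) by ring,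
            Real.mul_rpow zero_le_two (div_nonneg (hY.le.trans hhalf.1) hY.le)]
          ring
      _ ≤ 2 ^ (-δ) * l (y / 2) := by gcongr; exact ih _ hhalf
      _ ≤ l (2 * (y / 2)) := hdouble _ hhalf.1
      _ = l y := by ring_nf

theorem SlowlyVarying.exists_mul_rpow_neg_le {l : ℝ → ℝ} (hl : SlowlyVarying l)
    (hl_cont : ContinuousOn l (Ici 0)) (hl_pos : ∀ x ∈ Ici (0 : ℝ), 0 < l x) {δ : ℝ}
    (hδ : 0 < δ) : ∃ c > 0, ∀ᶠ y in atTop, c * y ^ (-δ) ≤ l y := by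
  have h2δ : (2 : ℝ) ^ (-δ) < 1 := Real.rpow_lt_one_of_one_lt_of_neg one_lt_two (by linarith)
  obtain ⟨Y₀, hY₀⟩ := eventually_atTop.mp
    ((hl 2 two_pos).eventually (lt_mem_nhds h2δ) |>.and (eventually_ge_atTop 0))
  set Y := max Y₀ 1
  have hY : 0 < Y := lt_max_of_lt_right one_pos
  have hdouble : ∀ y, Y ≤ y → 2 ^ (-δ) * l y ≤ l (2 * y) := fun y hy => by
    obtain ⟨hratio, hy0⟩ := hY₀ y (le_trans (le_max_left _ _) hy)
    exact ((lt_div_iff₀ (hl_pos y hy0)).mp hratio).le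
  obtain ⟨y₀, hy₀, hmin⟩ := (isCompact_Icc (a := Y) (b := 2 * Y)).exists_isMinOn
    (nonempty_Icc.mpr (by linarith))
    (hl_cont.mono fun y hy => hY.le.trans hy.1)
  refine ⟨l y₀ * Y ^ δ, mul_pos (hl_pos y₀ (hY.le.trans hy₀.1)) (by positivity),
    eventually_atTop.mpr ⟨Y, fun y hy => ?_⟩⟩
  have key := mul_div_rpow_neg_le_of_doubling hY (hl_pos y₀ (hY.le.trans hy₀.1)).le hδ.le
    (fun z hz => hmin hz) hdouble hy
  rwa [Real.div_rpow (hY.le.trans hy) hY.le, Real.rpow_neg hY.le, div_inv_eq_mul,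
    mul_comm _ (Y ^ δ), ← mul_assoc] at key

section RpowTail

variable {s e : ℝ → ℝ} {a ν : ℝ}

theorem hasDerivAt_rpow_add_one_div {x : ℝ} (hsd : HasDerivAt s (e x) x) (hx : 0 < s x)
    (hν : ν + 1 ≠ 0) : HasDerivAt (fun y => s y ^ (ν + 1) / (ν + 1)) (e x * s x ^ ν) x := by
  refine ((hsd.rpow_const (p := ν + 1) (Or.inl hx.ne')).div_const (ν + 1)).congr_deriv ?_
  rw [add_sub_cancel_right]
  field_simp

theorem tendsto_rpow_add_one_div (hs_top : Tendsto s atTop atTop) (hν : ν < -1) :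
    Tendsto (fun y => s y ^ (ν + 1) / (ν + 1)) atTop (𝓝 0) := by
  have := ((tendsto_rpow_neg_atTop (y := -(ν + 1)) (by linarith)).comp hs_top).div_const (ν + 1)
  simpa [Function.comp_def] using this

theorem integrableOn_Ioi_mul_rpow_of_hasDerivAt (hsd : ∀ x ∈ Ici a, HasDerivAt s (e x) x)
    (he : ∀ x ∈ Ioi a, 0 ≤ e x) (hs : ∀ x ∈ Ici a, 0 < s x) (hs_top : Tendsto s atTop atTop)
    (hν : ν < -1) : IntegrableOn (fun x => e x * s x ^ ν) (Ioi a) :=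
  integrableOn_Ioi_deriv_of_nonneg'
    (fun x hx => hasDerivAt_rpow_add_one_div (hsd x hx) (hs x hx) (by linarith))
    (fun x hx => mul_nonneg (he x hx) (Real.rpow_nonneg (hs x (mem_Ici_of_Ioi hx)).le ν))
    (tendsto_rpow_add_one_div hs_top hν)

theorem integral_Ioi_mul_rpow_of_hasDerivAt (hsd : ∀ x ∈ Ici a, HasDerivAt s (e x) x)
    (he : ∀ x ∈ Ioi a, 0 ≤ e x) (hs : ∀ x ∈ Ici a, 0 < s x) (hs_top : Tendsto s atTop atTop)
    (hν : ν < -1) : ∫ x in Ioi a, e x * s x ^ ν = s a ^ (ν + 1) / -(ν + 1) := by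
  rw [integral_Ioi_of_hasDerivAt_of_tendsto'
    (fun x hx => hasDerivAt_rpow_add_one_div (hsd x hx) (hs x hx) (by linarith))
    (integrableOn_Ioi_mul_rpow_of_hasDerivAt hsd he hs hs_top hν)
    (tendsto_rpow_add_one_div hs_top hν), zero_sub, div_neg]

theorem abs_integral_Ioi_le_of_abs_le_mul_rpow {F : ℝ → ℝ} {C : ℝ}
    (hsd : ∀ x ∈ Ici a, HasDerivAt s (e x) x) (he : ∀ x ∈ Ioi a, 0 ≤ e x)
    (hs : ∀ x ∈ Ici a, 0 < s x) (hs_top : Tendsto s atTop atTop) (hν : ν < -1)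
    (hF : ∀ x ∈ Ioi a, |F x| ≤ C * (e x * s x ^ ν)) :
    |∫ x in Ioi a, F x| ≤ C * (s a ^ (ν + 1) / -(ν + 1)) := by
  rw [← integral_Ioi_mul_rpow_of_hasDerivAt hsd he hs hs_top hν,
    ← MeasureTheory.integral_const_mul, ← Real.norm_eq_abs]
  refine norm_integral_le_of_norm_le
    ((integrableOn_Ioi_mul_rpow_of_hasDerivAt hsd he hs hs_top hν).const_mul C)
    ((ae_restrict_iff' measurableSet_Ioi).mpr (ae_of_all _ fun x hx => ?_))
  rw [Real.norm_eq_abs]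
  exact hF x hx

theorem integrableAtFilter_mul_rpow_of_hasDerivAt (hsd : ∀ x, HasDerivAt s (e x) x)
    (he : ∀ x, 0 ≤ e x) (hs_top : Tendsto s atTop atTop) (hν : ν < -1) :
    IntegrableAtFilter (fun x => e x * s x ^ ν) atTop := by
  obtain ⟨R, hR⟩ := eventually_atTop.mp (hs_top.eventually_gt_atTop 0)
  exact ⟨Ioi R, Ioi_mem_atTop R, integrableOn_Ioi_mul_rpow_of_hasDerivAt (fun x _ => hsd x)
    (fun x _ => he x) hR hs_top hν⟩

theorem eventually_abs_integral_Ioi_le_mul_rpow {F : ℝ → ℝ} {C : ℝ}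
    (hsd : ∀ x, HasDerivAt s (e x) x) (he : ∀ x, 0 ≤ e x) (hs_top : Tendsto s atTop atTop)
    (hν : ν < -1) (hF : ∀ᶠ x in atTop, |F x| ≤ C * (e x * s x ^ ν)) :
    ∀ᶠ x in atTop, |∫ u in Ioi x, F u| ≤ C * (s x ^ (ν + 1) / -(ν + 1)) := by
  obtain ⟨R, hR⟩ := eventually_atTop.mp (hF.and (hs_top.eventually_gt_atTop 0))
  filter_upwards [eventually_ge_atTop R] with x hx
  exact abs_integral_Ioi_le_of_abs_le_mul_rpow (fun y _ => hsd y) (fun y _ => he y)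
    (fun y hy => (hR y (hx.trans hy)).2) hs_top hν
    (fun y hy => (hR y (hx.trans (le_of_lt hy))).1)

theorem isBigO_mul_sq_integral_Ioi {F : ℝ → ℝ} {C : ℝ}
    (hsd : ∀ x, HasDerivAt s (e x) x) (he : ∀ x, 0 ≤ e x) (hs_top : Tendsto s atTop atTop)
    (hν : ν < -1) (hF : ∀ᶠ x in atTop, |F x| ≤ C * (e x * s x ^ ν)) :
    (fun x => e x * (∫ u in Ioi x, F u) ^ 2) =O[atTop] fun x => e x * s x ^ (2 * (ν + 1)) := by
  refine .of_bound ((C / -(ν + 1)) ^ 2) ?_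
  filter_upwards [eventually_abs_integral_Ioi_le_mul_rpow hsd he hs_top hν hF,
    hs_top.eventually_gt_atTop 0] with x hT hsx
  have hsq : (s x ^ (ν + 1)) ^ 2 = s x ^ (2 * (ν + 1)) := by
    rw [← Real.rpow_natCast, ← Real.rpow_mul hsx.le]; ring_nf
  rw [Real.norm_of_nonneg (by positivity [he x]), Real.norm_of_nonneg (by positivity [he x]),
    ← hsq]
  calc e x * (∫ u in Ioi x, F u) ^ 2 ≤ e x * (C * (s x ^ (ν + 1) / -(ν + 1))) ^ 2 :=
        mul_le_mul_of_nonneg_left (sq_le_sq' (abs_le.mp hT).1 (abs_le.mp hT).2) (he x)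
    _ = (C / -(ν + 1)) ^ 2 * (e x * (s x ^ (ν + 1)) ^ 2) := by ring

end RpowTail

theorem eventually_abs_le_mul_rpow_of_tendsto {s e F l : ℝ → ℝ} {p c δ : ℝ}
    (he : ∀ x, 0 < e x) (hs_top : Tendsto s atTop atTop) (hl : SlowlyVarying l)
    (hl_cont : ContinuousOn l (Ici 0)) (hl_pos : ∀ x ∈ Ici (0 : ℝ), 0 < l x) (hδ : 0 < δ)
    (hlim : Tendsto (fun x => (e x)⁻¹ * |s x| ^ p * l |s x| * F x) atTop (𝓝 c)) :
    ∃ C, ∀ᶠ x in atTop, |F x| ≤ C * (e x * s x ^ (δ - p)) := by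
  obtain ⟨c₀, hc₀, hl_low⟩ := hl.exists_mul_rpow_neg_le hl_cont hl_pos hδ
  refine ⟨(|c| + 1) / c₀, ?_⟩
  filter_upwards [hlim.abs.eventually (ge_mem_nhds (lt_add_one |c|)),
    hs_top.eventually_gt_atTop 0, hs_top.eventually hl_low] with x hbound hsx hlx
  have hex := he x
  have hlx_pos : 0 < l (s x) := hl_pos _ hsx.le
  rw [abs_of_pos hsx, abs_mul, abs_of_pos (by positivity)] at hbound
  calc |F x| = e x * s x ^ (δ - p) / c₀ * ((e x)⁻¹ * s x ^ p * (c₀ * s x ^ (-δ)) * |F x|) := by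
        rw [Real.rpow_sub hsx, Real.rpow_neg hsx.le]
        field_simp
    _ ≤ e x * s x ^ (δ - p) / c₀ * ((e x)⁻¹ * s x ^ p * l (s x) * |F x|) := by gcongr
    _ ≤ e x * s x ^ (δ - p) / c₀ * (|c| + 1) := by gcongr
    _ = (|c| + 1) / c₀ * (e x * s x ^ (δ - p)) := by ring

theorem MeasureTheory.Integrable.continuous_integral_Ioi {E : Type*} [NormedAddCommGroup E]
    [NormedSpace ℝ E] {μ : Measure ℝ} [NullSingletonClass μ] {F : ℝ → E} (hF : Integrable F μ) :
    Continuous fun x => ∫ u in Ioi x, F u ∂μ :=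
  continuous_iff_continuousAt.mpr fun x =>
    (hF.integrableOn.continuousOn_Ici_primitive_Ioi (a₀ := x - 1)).continuousAt
      (Ici_mem_nhds (by linarith))

theorem integrableAtFilter_mul_sq_integral_Ioi_atTop {s e F l : ℝ → ℝ} {p c : ℝ}
    (hsd : ∀ x, HasDerivAt s (e x) x) (he : ∀ x, 0 < e x) (hF : Integrable F)
    (hl : SlowlyVarying l) (hl_cont : ContinuousOn l (Ici 0))
    (hl_pos : ∀ x ∈ Ici (0 : ℝ), 0 < l x) (hp : 3 / 2 < p)
    (hlim : Tendsto (fun x => (e x)⁻¹ * |s x| ^ p * l |s x| * F x) atTop (𝓝 c)) :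
    IntegrableAtFilter (fun x => e x * (∫ u in Ioi x, F u) ^ 2) atTop := by
  have he_meas : Measurable e :=
    (funext fun x => (hsd x).deriv : deriv s = e) ▸ measurable_deriv s
  have hmeas : StronglyMeasurableAtFilter (fun x => e x * (∫ u in Ioi x, F u) ^ 2) atTop :=
    (he_meas.mul (hF.continuous_integral_Ioi.measurable.pow_const 2)).aestronglyMeasurable
      |>.stronglyMeasurableAtFilter
  rcases tendsto_atTop_of_monotone (monotone_of_deriv_nonneg (fun x => (hsd x).differentiableAt)
    fun x => (hsd x).deriv ▸ (he x).le) with hs_top | ⟨S, hS⟩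
  · -- `δ = (p - 3/2) / 2` makes `2 (δ - p + 1) < -1`
    obtain ⟨C, hC⟩ := eventually_abs_le_mul_rpow_of_tendsto he hs_top hl hl_cont hl_pos
      (δ := (p - 3 / 2) / 2) (by linarith) hlim
    have hν : (p - 3 / 2) / 2 - p < -1 := by linarith
    exact (isBigO_mul_sq_integral_Ioi hsd (fun x => (he x).le) hs_top hν hC).integrableAtFilter
      hmeas (integrableAtFilter_mul_rpow_of_hasDerivAt hsd (fun x => (he x).le) hs_top
        (by linarith))
  · have hT : ∀ x, |∫ u in Ioi x, F u| ≤ ∫ u, |F u| := fun x =>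
      MeasureTheory.abs_integral_le_integral_abs.trans
        (setIntegral_le_integral hF.abs (ae_of_all _ fun u => abs_nonneg (F u)))
    refine (IsBigO.of_bound ((∫ u, |F u|) ^ 2) (Eventually.of_forall fun x => ?_))
      |>.integrableAtFilter hmeas ⟨Ioi 0, Ioi_mem_atTop 0,
        integrableOn_Ioi_deriv_of_nonneg' (fun x _ => hsd x) (fun x _ => (he x).le) hS⟩
    rw [Real.norm_of_nonneg (by positivity [he x]), Real.norm_of_nonneg (he x).le, mul_comm]
    exact mul_le_mul_of_nonneg_right (sq_le_sq' (abs_le.mp (hT x)).1 (abs_le.mp (hT x)).2)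
      (he x).le

theorem integrableAtFilter_atBot_of_comp_neg {E : Type*} [NormedAddCommGroup E] {f : ℝ → E}
    (h : IntegrableAtFilter (fun x => f (-x)) atTop) : IntegrableAtFilter f atBot := by
  have := measurableEmbedding_neg.integrableAtFilter_map_iff (l := atTop) (μ := volume) (f := f)
  rw [Measure.map_neg_eq_self, Filter.map_neg, neg_atTop] at this
  exact this.mpr h

theorem integrable_mul_sq_integral_Ioi {s e F l : ℝ → ℝ} {p c c' : ℝ}
    (hsd : ∀ x, HasDerivAt s (e x) x) (he_cont : Continuous e) (he : ∀ x, 0 < e x)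
    (hF : Integrable F) (hF₀ : ∫ x, F x = 0)
    (hl : SlowlyVarying l) (hl_cont : ContinuousOn l (Ici 0))
    (hl_pos : ∀ x ∈ Ici (0 : ℝ), 0 < l x) (hp : 3 / 2 < p)
    (htop : Tendsto (fun x => (e x)⁻¹ * |s x| ^ p * l |s x| * F x) atTop (𝓝 c))
    (hbot : Tendsto (fun x => (e x)⁻¹ * |s x| ^ p * l |s x| * F x) atBot (𝓝 c')) :
    Integrable (fun x => e x * (∫ u in Ioi x, F u) ^ 2) := by
  have hT_neg (x : ℝ) : ∫ u in Ioi x, F (-u) = -∫ u in Ioi (-x), F u := by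
    rw [integral_comp_neg_Ioi, eq_neg_iff_add_eq_zero,
      integral_Iic_add_Ioi hF.integrableOn hF.integrableOn, hF₀]
  have hbot' : IntegrableAtFilter (fun x => e (-x) * (∫ u in Ioi x, F (-u)) ^ 2) atTop :=
    integrableAtFilter_mul_sq_integral_Ioi_atTop (s := fun x => -s (-x))
      (fun x => (((hsd (-x)).comp x (hasDerivAt_neg x)).neg).congr_deriv (by ring))
      (fun x => he (-x)) hF.comp_neg hl hl_cont hl_pos hp
      (by simpa [Function.comp_def] using hbot.comp tendsto_neg_atTop_atBot)
  refine integrable_iff_integrableAtFilter_atBot_atTop.mpr ⟨⟨?_,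
    integrableAtFilter_mul_sq_integral_Ioi_atTop hsd he hF hl hl_cont hl_pos hp htop⟩,
    (he_cont.mul (hF.continuous_integral_Ioi.pow 2)).locallyIntegrable⟩
  exact integrableAtFilter_atBot_of_comp_neg (by simpa [hT_neg] using hbot')

theorem continuous_exp_neg_two_mul_primitive {b σ : ℝ → ℝ} (hb : Continuous b)
    (hσ : Continuous σ) (hσ₀ : ∀ x, σ x ≠ 0) :
    Continuous fun v => Real.exp (-2 * ∫ u in (0 : ℝ)..v, b u / σ u ^ 2) := by
  have : Continuous fun u => b u / σ u ^ 2 := hb.div (hσ.pow 2) fun x => pow_ne_zero 2 (hσ₀ x)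
  exact Real.continuous_exp.comp
    (continuous_const.mul (continuous_primitive (fun _ _ => this.intervalIntegrable _ _) 0))

section WithDensity

variable {α : Type*} [MeasurableSpace α] {μ : Measure α} {ρ : α → ℝ} {κ : ℝ}

theorem integrable_withDensity_ofReal_const_mul_iff (hκ : 0 < κ) (hρ : Measurable ρ)
    (hρ₀ : ∀ x, 0 ≤ ρ x) {h : α → ℝ} :
    Integrable h (μ.withDensity fun x => ENNReal.ofReal (κ * ρ x)) ↔
      Integrable (fun x => h x * ρ x) μ := by
  rw [integrable_withDensity_iff (hρ.const_mul κ).ennreal_ofReal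
    (ae_of_all _ fun _ => ENNReal.ofReal_lt_top)]
  simp_rw [ENNReal.toReal_ofReal (mul_nonneg hκ.le (hρ₀ _)), mul_left_comm _ κ]
  exact integrable_const_mul_iff (isUnit_iff_ne_zero.mpr hκ.ne') _

theorem integral_withDensity_ofReal_const_mul (hκ : 0 ≤ κ) (hρ : Measurable ρ)
    (hρ₀ : ∀ x, 0 ≤ ρ x) (h : α → ℝ) :
    ∫ x, h x ∂(μ.withDensity fun x => ENNReal.ofReal (κ * ρ x)) = κ * ∫ x, h x * ρ x ∂μ := by
  rw [integral_withDensity_eq_integral_toReal_smul (hρ.const_mul κ).ennreal_ofReal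
    (ae_of_all _ fun _ => ENNReal.ofReal_lt_top), ← MeasureTheory.integral_const_mul]
  simp only [ENNReal.toReal_ofReal (mul_nonneg hκ (hρ₀ _)), smul_eq_mul]
  congr 1 with x
  ring

end WithDensity

theorem gprime_sigma_L2_general
    (b σ : ℝ → ℝ) (hb : Continuous b) (hσ : Continuous σ)
    (hσpos : ∀ x, 0 < σ x)
    (s : ℝ → ℝ)
    (hs : ∀ x, s x = ∫ v in (0 : ℝ)..x,
        Real.exp (-2 * ∫ u in (0 : ℝ)..v, b u / (σ u) ^ 2))
    (m : ℝ → ℝ) (hm : ∀ x, m x = ((σ x) ^ 2 * deriv s x)⁻¹)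
    (hmint : Integrable m)
    (κ : ℝ) (hκ : κ = (∫ x, m x)⁻¹)
    (μ : Measure ℝ)
    (hμ : μ = volume.withDensity (fun x => ENNReal.ofReal (κ * m x)))
    (f : ℝ → ℝ)
    (hfint : Integrable f μ) (hfmean : ∫ x, f x ∂μ = 0)
    (g : ℝ → ℝ)
    (hg : ∀ x, g x = 2 * ∫ v in (0 : ℝ)..x,
        deriv s v * ∫ u in Set.Ioi v, f u * m u)
    (α : ℝ) (hα : 2 < α) (fp fm : ℝ)
    (l : ℝ → ℝ) (hlcont : ContinuousOn l (Set.Ici 0))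
    (hlpos : ∀ x ∈ Set.Ici (0 : ℝ), 0 < l x) (hlsv : SlowlyVarying l)
    (hftop : Tendsto
      (fun x => ((σ x * deriv s x) ^ 2)⁻¹ * |s x| ^ (2 - 1 / α) * l |s x| * f x)
      atTop (nhds fp))
    (hfbot : Tendsto
      (fun x => ((σ x * deriv s x) ^ 2)⁻¹ * |s x| ^ (2 - 1 / α) * l |s x| * f x)
      atBot (nhds fm)) :
    Integrable (fun x => (deriv g x * σ x) ^ 2) μ := by
  set e : ℝ → ℝ := fun v => Real.exp (-2 * ∫ u in (0 : ℝ)..v, b u / σ u ^ 2)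
  have he_cont : Continuous e := continuous_exp_neg_two_mul_primitive hb hσ fun x => (hσpos x).ne'
  have hsd (x : ℝ) : HasDerivAt s (e x) x :=
    funext hs ▸ (he_cont.integral_hasStrictDerivAt 0 x).hasDerivAt
  have hs' : deriv s = e := funext fun x => (hsd x).deriv
  have hm' (x : ℝ) : m x = (σ x ^ 2 * e x)⁻¹ := hs' ▸ hm x
  have hσe (x : ℝ) : 0 < σ x ^ 2 * e x := mul_pos (pow_pos (hσpos x) 2) (Real.exp_pos _)
  have hm_pos (x : ℝ) : 0 < m x := hm' x ▸ inv_pos.mpr (hσe x)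
  have hm_meas : Measurable m :=
    funext hm' ▸ (((hσ.pow 2).mul he_cont).inv₀ fun x => (hσe x).ne').measurable
  have hκ_pos : 0 < κ := hκ ▸ inv_pos.mpr (integral_pos_iff_support_of_nonneg
    (fun x => (hm_pos x).le) hmint |>.mpr (by simp [Function.support, (hm_pos _).ne']))
  rw [hμ, integrable_withDensity_ofReal_const_mul_iff hκ_pos hm_meas fun x => (hm_pos x).le]
    at hfint ⊢
  have hF₀ : ∫ x, f x * m x = 0 := by
    simpa [hμ, integral_withDensity_ofReal_const_mul hκ_pos.le hm_meas fun x => (hm_pos x).le,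
      hκ_pos.ne'] using hfmean
  have hg' (x : ℝ) : deriv g x = 2 * (e x * ∫ u in Ioi x, f u * m u) := by
    rw [funext hg, hs']
    exact (((he_cont.mul hfint.continuous_integral_Ioi).integral_hasStrictDerivAt 0 x).hasDerivAt
      |>.const_mul 2).deriv
  have hform (x : ℝ) : ((σ x * deriv s x) ^ 2)⁻¹ * |s x| ^ (2 - 1 / α) * l |s x| * f x =
      (e x)⁻¹ * |s x| ^ (2 - 1 / α) * l |s x| * (f x * m x) := by
    rw [hm', hs']
    field_simp
  have hp : 3 / 2 < 2 - 1 / α := by linarith [one_div_lt_one_div_of_lt two_pos hα]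
  refine ((integrable_mul_sq_integral_Ioi hsd he_cont (fun x => Real.exp_pos _) hfint hF₀ hlsv
    hlcont hlpos hp (funext hform ▸ hftop) (funext hform ▸ hfbot)).const_mul 4).congr
    (ae_of_all _ fun x => ?_)
  have := (hσpos x).ne'
  simp only [hg', hm']
  field_simp
  ring

/-- If `α > 2` in the stable asymptotic condition for `f`, then the function
`g` solving the Poisson equation satisfies `g'·σ ∈ L²(μ)`. -/
theorem gprime_sigma_L2
    (b σ : ℝ → ℝ) (hb : Continuous b) (hσ : Continuous σ)
    (hσpos : ∀ x, 0 < σ x)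
    (s : ℝ → ℝ)
    (hs : ∀ x, s x = ∫ v in (0 : ℝ)..x,
        Real.exp (-2 * ∫ u in (0 : ℝ)..v, b u / (σ u) ^ 2))
    (m : ℝ → ℝ) (hm : ∀ x, m x = ((σ x) ^ 2 * deriv s x)⁻¹)
    (hmint : Integrable m)
    (κ : ℝ) (hκ : κ = (∫ x, m x)⁻¹)
    (μ : Measure ℝ)
    (hμ : μ = volume.withDensity (fun x => ENNReal.ofReal (κ * m x)))
    (f : ℝ → ℝ) (hf : Continuous f)
    (hfint : Integrable f μ) (hfmean : ∫ x, f x ∂μ = 0)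
    (hinner : ∀ v : ℝ, IntegrableOn (fun u => f u * m u) (Set.Ioi v))
    (g : ℝ → ℝ)
    (hg : ∀ x, g x = 2 * ∫ v in (0 : ℝ)..x,
        deriv s v * ∫ u in Set.Ioi v, f u * m u)
    (α : ℝ) (hα : 2 < α) (fp fm : ℝ)
    (l : ℝ → ℝ) (hlcont : ContinuousOn l (Set.Ici 0))
    (hlpos : ∀ x ∈ Set.Ici (0 : ℝ), 0 < l x) (hlsv : SlowlyVarying l)
    (hftop : Tendsto
      (fun x => ((σ x * deriv s x) ^ 2)⁻¹ * |s x| ^ (2 - 1 / α) * l |s x| * f x)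
      atTop (nhds fp))
    (hfbot : Tendsto
      (fun x => ((σ x * deriv s x) ^ 2)⁻¹ * |s x| ^ (2 - 1 / α) * l |s x| * f x)
      atBot (nhds fm)) :
    Integrable (fun x => (deriv g x * σ x) ^ 2) μ :=
  gprime_sigma_L2_general b σ hb hσ hσpos s hs m hm hmint κ hκ μ hμ f hfint hfmean g hg α hα fp fm l
    hlcont hlpos hlsv hftop hfbot
end
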